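/- arXiv:1305.3900 — 10 statements merged into one kernel-verified Lean document; each statement's English description precedes it below -/
import Mathlib

section
/- If (X, ⊳) is an RC-system (i.e., a set with a binary operation satisfying (x ⊳ y) ⊳ (x ⊳ z) = (y ⊳ x) ⊳ (y ⊳ z) for all x, y, z) and X is finite with the map (x, y) ↦ (x ⊳ y, y ⊳ x) injective on X², then the map Φ : X² → X² defined by Φ(x, y) = (x ⊳ x, x ⊳ y) is injective, provided also that for each x the left-translation y ↦ x ⊳ y is injective. -/
/-!
Left translations of a finite RC-quasigroup are bijections. The RC-law
`(x ⊳ y) ⊳ (x ⊳ y) = (y ⊳ x) ⊳ (y ⊳ y)` shows that every left translation maps the set of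
squares into itself, hence onto itself by finiteness; so its complement is invariant too.
Since `t ⊳ t` is a square, `t` must be one, so squaring is surjective, hence injective, and
`Φ` is injective because left translations are.
-/

theorem Set.Finite.mem_of_apply_mem {α : Type*} {f : α → α} {s : Set α} (hs : s.Finite)
    (hf : Function.Injective f) (hmaps : Set.MapsTo f s s) {x : α} (hx : f x ∈ s) : x ∈ s := by
  obtain ⟨y, hy, hyx⟩ := ((hs.injOn_iff_bijOn_of_mapsTo hmaps).mp hf.injOn).surjOn hx
  exact hf hyx ▸ hy

theorem mapsTo_range_op_self {X : Type*} (op : X → X → X)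
    (hRC : ∀ x y z : X, op (op x y) (op x z) = op (op y x) (op y z))
    (hsurj : ∀ x : X, Function.Surjective (op x)) (v : X) :
    Set.MapsTo (op v) (Set.range fun x => op x x) (Set.range fun x => op x x) := by
  rintro _ ⟨y, rfl⟩
  obtain ⟨x, rfl⟩ := hsurj y v
  exact ⟨op x y, hRC x y y⟩

theorem surjective_op_self_of_finite {X : Type*} [Finite X] (op : X → X → X)
    (hRC : ∀ x y z : X, op (op x y) (op x z) = op (op y x) (op y z))
    (hL : ∀ x : X, Function.Injective (op x)) :
    Function.Surjective fun x => op x x := fun t =>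
  (Set.toFinite _).mem_of_apply_mem (hL t)
    (mapsTo_range_op_self op hRC (fun x => Finite.surjective_of_injective (hL x)) t)
    ⟨t, rfl⟩

theorem stmt0_general {X : Type*} [Finite X] (op : X → X → X)
    (hRC : ∀ x y z : X, op (op x y) (op x z) = op (op y x) (op y z))
    (hL : ∀ x : X, Function.Injective (op x)) :
    Function.Injective (fun p : X × X => (op p.1 p.1, op p.1 p.2)) := by
  have hsq : Function.Injective fun x => op x x :=
    Finite.injective_iff_surjective.mpr (surjective_op_self_of_finite op hRC hL)
  rintro ⟨a, y⟩ ⟨b, z⟩ h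
  obtain ⟨hab, hyz⟩ := Prod.mk.inj h
  obtain rfl : a = b := hsq hab
  exact Prod.ext rfl (hL a hyz)

/-- In a finite RC-system with injective `Ψ(x,y) = (x ⊳ y, y ⊳ x)` and injective
left-translations, the map `Φ(x,y) = (x ⊳ x, x ⊳ y)` is injective. -/
theorem stmt0 {X : Type*} [Finite X] (op : X → X → X)
    (hRC : ∀ x y z : X, op (op x y) (op x z) = op (op y x) (op y z))
    (hΨ : Function.Injective (fun p : X × X => (op p.1 p.2, op p.2 p.1)))
    (hL : ∀ x : X, Function.Injective (op x)) :
    Function.Injective (fun p : X × X => (op p.1 p.1, op p.1 p.2)) :=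
  stmt0_general op hRC hL
end

section
/- Every finite RC-quasigroup (X, ⊳) whose map Ψ(x,y) = (x ⊳ y, y ⊳ x) is bijective is of class p for some positive integer p; that is, Π_{p+1}(x, ..., x, y) = y holds for all x, y in X, where Π_n is defined inductively by Π₁(x₁) = x₁ and Π_n(x₁,...,x_n) = Π_{n-1}(x₁,...,x_{n-1}) ⊳ Π_{n-1}(x₁,...,x_{n-2}, x_n). -/
/-!
Since `Π_{n+1}(x,…,x,y) = Π_n(x,…,x) ⊳ Π_n(x,…,x,y)`, the pair
`(Π_{n+1}(x,…,x), Π_{n+1}(x,…,x,·))` is obtained from `(x, id)` by `n` applications of the map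
`(a, f) ↦ (a ⊳ a, (a ⊳ ·) ∘ f)` on the finite set `X × (X → X)`. Injectivity of `Ψ` on the
diagonal and of the left translations make this map injective, hence a permutation, and a
power of it is the identity.
-/

/-- `PiAux op l y` is `Π_{r+1}(x₁, ..., x_r, y)` where `l = [x_r, ..., x₁]` is the list of the
first `r` arguments in reverse order, following the inductive definition
`Π₁(x₁) = x₁`, `Π_n(x₁,...,x_n) = Π_{n-1}(x₁,...,x_{n-1}) ⊳ Π_{n-1}(x₁,...,x_{n-2},x_n)`. -/
def PiAux {X : Type*} (op : X → X → X) : List X → X → X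
  | [], y => y
  | a :: l, y => op (PiAux op l a) (PiAux op l y)

open Function Nat

section SquareStep

variable {X : Type*} (op : X → X → X)

def squareStep (s : X × (X → X)) : X × (X → X) := (op s.1 s.1, op s.1 ∘ s.2)

theorem iterate_squareStep_id (p : ℕ) (x : X) :
    (squareStep op)^[p] (x, id) =
      (PiAux op (List.replicate p x) x, PiAux op (List.replicate p x)) := by
  induction p with
  | zero => rfl
  | succ p ih =>
    rw [iterate_succ_apply', ih]
    rfl

variable {op}

theorem squareStep_injective (hsq : Injective fun x => op x x) (hL : ∀ x, Injective (op x)) :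
    Injective (squareStep op) := by
  rintro ⟨a, f⟩ ⟨b, g⟩ h
  obtain ⟨hab, hfg⟩ := Prod.mk.inj h
  obtain rfl : a = b := hsq hab
  exact Prod.ext rfl (funext fun y => hL a (congrFun hfg y))

end SquareStep

theorem stmt1_general {X : Type*} [Finite X] (op : X → X → X)
    (hL : ∀ x : X, Function.Bijective (op x))
    (hΨ : Function.Bijective (fun p : X × X => (op p.1 p.2, op p.2 p.1))) :
    ∃ p : ℕ, 0 < p ∧ ∀ x y : X, PiAux op (List.replicate p x) y = y := by
  have := Fintype.ofFinite (X × (X → X))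
  have hsq : Injective fun x => op x x := fun a b h =>
    congrArg Prod.fst (hΨ.1 (Prod.ext h h) : (a, a) = (b, b))
  have hperiod := injective_iff_iterate_factorial_card_eq_id.mp
    (squareStep_injective hsq fun x => (hL x).1)
  refine ⟨(Fintype.card (X × (X → X)))!, Nat.factorial_pos _, fun x y => ?_⟩
  have := congrFun (congrArg Prod.snd (congrFun hperiod (x, id))) y
  rwa [iterate_squareStep_id] at this

/-- every finite RC-quasigroup with bijective `Ψ` is of class `p` for some `p ≥ 1`,
i.e. `Π_{p+1}(x, ..., x, y) = y` for all `x, y`. -/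
theorem stmt1 {X : Type*} [Finite X] (op : X → X → X)
    (hRC : ∀ x y z : X, op (op x y) (op x z) = op (op y x) (op y z))
    (hL : ∀ x : X, Function.Bijective (op x))
    (hΨ : Function.Bijective (fun p : X × X => (op p.1 p.2, op p.2 p.1))) :
    ∃ p : ℕ, 0 < p ∧ ∀ x y : X, PiAux op (List.replicate p x) y = y :=
  stmt1_general op hL hΨ
end

section
/- Let M be the structure monoid of a finite RC-quasigroup (X, ⊳) of size n, with I-structure ν : ℕⁿ → M satisfying ν(x) = x for x ∈ X and the product formulas ν(uv) = ν(u)ν(π(u)[v]), π(uv) = π(π(u)[v])∘π(u). Then for all x₁,...,x_r in X, ν(x₁⋯x_r) = Σ_r(x₁,...,x_r), where Σ₁(x₁) = x₁ and Σ_r(x₁,...,x_r) = Σ_{r-1}(x₁,...,x_{r-1})·Π_r(x₁,...,x_r). -/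
/-- `SigmaRev op l` is the word `Σ_r(x₁, ..., x_r)` (as its list of letters
`[Π₁(x₁), Π₂(x₁,x₂), ..., Π_r(x₁,...,x_r)]`) for `l = [x_r, ..., x₁]` the reversed argument
list, following `Σ₁(x₁) = x₁`, `Σ_r(x₁,...,x_r) = Σ_{r-1}(x₁,...,x_{r-1})·Π_r(x₁,...,x_r)`. -/
def SigmaRev {X : Type*} (op : X → X → X) : List X → List X
  | [] => []
  | a :: l => SigmaRev op l ++ [PiAux op l a]

/-- The defining relations `x(x ⊳ y) = y(y ⊳ x)` of the structure monoid of `(X, ⊳)`. -/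
def structRels {X : Type*} (op : X → X → X) : FreeMonoid X → FreeMonoid X → Prop :=
  fun a b => ∃ x y : X,
    a = FreeMonoid.of x * FreeMonoid.of (op x y) ∧ b = FreeMonoid.of y * FreeMonoid.of (op y x)

/-!
Comparing `ν` on the two sides of the defining relation `x (x ⊳ y) = y (y ⊳ x)` and using
injectivity of `ν` shows that `π` of a generator `x` is the left translation `x ⊳ -`. The product
formula for `π` then identifies `π (x₁⋯x_r)` with `y ↦ Π_{r+1}(x₁, …, x_r, y)`, and the product
formula for `ν` peels off the last letter: `ν (x₁⋯x_r) = ν (x₁⋯x_{r-1}) · Π_r(x₁, …, x_r)`.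
-/

section

variable {X : Type*} [DecidableEq X]

theorem Pi.single_comp_perm_symm {R : Type*} [Zero R] (σ : Equiv.Perm X) (a : X) (r : R) :
    (fun w => (Pi.single a r : X → R) (σ.symm w)) = Pi.single (σ a) r := by
  ext w
  simp only [Pi.single_apply, Equiv.symm_apply_eq]

theorem count_append_singleton_eq_add_single (l : List X) (a : X) :
    (fun x => (l ++ [a]).count x) = (fun x => l.count x) + Pi.single a 1 := by
  funext x
  simp [List.count_append, Pi.single_apply, List.count_singleton', eq_comm]

theorem eq_of_single_add_single_eq {x y a b : X} (hxy : x ≠ y)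
    (h : (Pi.single x 1 + Pi.single a 1 : X → ℕ) = Pi.single y 1 + Pi.single b 1) : a = y := by
  by_contra hay
  have := congrFun h y
  simp [Pi.single_apply, hxy.symm, Ne.symm hay] at this
  split_ifs at this

theorem Equiv.Perm.apply_eq_of_forall_ne {σ : Equiv.Perm X} {f : X → X}
    (hf : Function.Injective f) {x : X} (h : ∀ y ≠ x, σ y = f y) : σ x = f x := by
  by_contra hne
  have hw : σ.symm (f x) ≠ x := fun hw => hne (by rw [← σ.apply_symm_apply (f x), hw])
  exact hw (hf (by rw [← h _ hw, σ.apply_symm_apply]))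

end

namespace IStructure

variable {X M : Type*} [DecidableEq X] [Monoid M] {ν : (X → ℕ) → M} {π : (X → ℕ) → Equiv.Perm X}

theorem map_add_single (hprod : ∀ u v : X → ℕ, ν (u + v) = ν u * ν (fun x => v ((π u).symm x)))
    {f : X → M} (hof : ∀ x, ν (Pi.single x 1) = f x) (u : X → ℕ) (a : X) :
    ν (u + Pi.single a 1) = ν u * f (π u a) := by
  rw [hprod, Pi.single_comp_perm_symm, hof]

theorem perm_zero_eq_one (hν : Function.Injective ν) (hone : ν 0 = 1)
    (hprod : ∀ u v : X → ℕ, ν (u + v) = ν u * ν (fun x => v ((π u).symm x))) : π 0 = 1 := by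
  ext x
  have hsingle : ν (Pi.single x 1) = ν (Pi.single (π 0 x) 1) := by
    simpa [hone, Pi.single_comp_perm_symm] using hprod 0 (Pi.single x 1)
  simpa [Pi.single_apply, eq_comm] using congrFun (hν hsingle) x

theorem perm_single_apply {op : X → X → X} (hν : Function.Injective ν)
    (hprod : ∀ u v : X → ℕ, ν (u + v) = ν u * ν (fun x => v ((π u).symm x)))
    {f : X → M} (hof : ∀ x, ν (Pi.single x 1) = f x)
    (hrel : ∀ x y, f x * f (op x y) = f y * f (op y x)) (hop : ∀ x, Function.Injective (op x))
    (x y : X) : π (Pi.single x 1) y = op x y := by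
  have hsquare : ∀ y, Pi.single x 1 + Pi.single ((π (Pi.single x 1)).symm (op x y)) 1
      = (Pi.single y 1 + Pi.single ((π (Pi.single y 1)).symm (op y x)) 1 : X → ℕ) := by
    intro y
    apply hν
    simp only [map_add_single hprod hof, hof, Equiv.apply_symm_apply]
    exact hrel x y
  have hne : ∀ y ≠ x, π (Pi.single x 1) y = op x y := fun y hyx =>
    ((Equiv.symm_apply_eq _).mp (eq_of_single_add_single_eq hyx.symm (hsquare y))).symm
  rcases eq_or_ne y x with rfl | hyx
  -- the relation is trivial at `y = x`; injectivity of `op y` fills in this last value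
  · exact Equiv.Perm.apply_eq_of_forall_ne (hop y) hne
  · exact hne y hyx

theorem perm_count_apply {op : X → X → X}
    (hperm : ∀ (u v : X → ℕ) (x : X), π (u + v) x = π (fun z => v ((π u).symm z)) (π u x))
    (hzero : π 0 = 1) (hsingle : ∀ x y, π (Pi.single x 1) y = op x y) (l : List X) (y : X) :
    π (fun x => l.count x) y = PiAux op l.reverse y := by
  induction l using List.reverseRecOn generalizing y with
  | nil =>
    show π 0 y = y
    rw [hzero, Equiv.Perm.one_apply]
  | append_singleton l a ih =>
    rw [count_append_singleton_eq_add_single, hperm, Pi.single_comp_perm_symm, hsingle, ih, ih]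
    simp [PiAux]

theorem map_count_eq_prod_sigmaRev {op : X → X → X}
    (hprod : ∀ u v : X → ℕ, ν (u + v) = ν u * ν (fun x => v ((π u).symm x)))
    {f : X → M} (hof : ∀ x, ν (Pi.single x 1) = f x) (hone : ν 0 = 1)
    (hπ : ∀ (l : List X) (y : X), π (fun x => l.count x) y = PiAux op l.reverse y) (l : List X) :
    ν (fun x => l.count x) = ((SigmaRev op l.reverse).map f).prod := by
  induction l using List.reverseRecOn with
  | nil => exact hone
  | append_singleton l a ih =>
    rw [count_append_singleton_eq_add_single, map_add_single hprod hof, ih, hπ]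
    simp [SigmaRev]

end IStructure

theorem stmt6_general {X : Type*} [DecidableEq X] (op : X → X → X)
    (hL : ∀ x : X, Function.Bijective (op x))
    (ν : (X → ℕ) → PresentedMonoid (structRels op))
    (hν : Function.Bijective ν) (hone : ν 0 = 1)
    (hof : ∀ x : X, ν (Pi.single x 1) = PresentedMonoid.of (structRels op) x)
    (π : (X → ℕ) → Equiv.Perm X)
    (hprod : ∀ u v : X → ℕ, ν (u + v) = ν u * ν (fun x => v ((π u).symm x)))
    (hperm : ∀ (u v : X → ℕ) (x : X),
      π (u + v) x = π (fun z => v ((π u).symm z)) (π u x)) :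
    ∀ l : List X,
      ν (fun x => l.count x)
        = ((SigmaRev op l.reverse).map (PresentedMonoid.of (structRels op))).prod := by
  have hrel : ∀ x y, PresentedMonoid.of (structRels op) x * PresentedMonoid.of _ (op x y)
      = PresentedMonoid.of _ y * PresentedMonoid.of _ (op y x) :=
    fun x y => PresentedMonoid.mk_eq_mk_of_rel ⟨x, y, rfl, rfl⟩
  have hsingle :=
    IStructure.perm_single_apply hν.injective hprod hof hrel fun x => (hL x).injective
  have hzero := IStructure.perm_zero_eq_one hν.injective hone hprod
  exact IStructure.map_count_eq_prod_sigmaRev hprod hof hone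
    (IStructure.perm_count_apply hperm hzero hsingle)

/-- in the structure monoid `M` of a finite RC-quasigroup `(X, ⊳)`, with
I-structure `ν` satisfying `ν(x) = x` on `X` and the product formulas, one has
`ν(x₁⋯x_r) = Σ_r(x₁,...,x_r)` for all `x₁, ..., x_r ∈ X` (the word `x₁⋯x_r` being viewed in
`ℕⁿ` as the vector of letter multiplicities). -/
theorem stmt6 {X : Type*} [Fintype X] [DecidableEq X] (op : X → X → X)
    (hRC : ∀ x y z : X, op (op x y) (op x z) = op (op y x) (op y z))
    (hL : ∀ x : X, Function.Bijective (op x))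
    (ν : (X → ℕ) → PresentedMonoid (structRels op))
    (hν : Function.Bijective ν) (hone : ν 0 = 1)
    (hof : ∀ x : X, ν (Pi.single x 1) = PresentedMonoid.of (structRels op) x)
    (π : (X → ℕ) → Equiv.Perm X)
    (hprod : ∀ u v : X → ℕ, ν (u + v) = ν u * ν (fun x => v ((π u).symm x)))
    (hperm : ∀ (u v : X → ℕ) (x : X),
      π (u + v) x = π (fun z => v ((π u).symm z)) (π u x)) :
    ∀ l : List X,
      ν (fun x => l.count x)
        = ((SigmaRev op l.reverse).map (PresentedMonoid.of (structRels op))).prod :=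
  stmt6_general op hL ν hν hone hof π hprod hperm
end

section
/- In the structure monoid M of a finite RC-quasigroup (X, ⊳) of size n, for any x ≠ y in X, the element x(x ⊳ y) = y(y ⊳ x) is the right-lcm (least common right-multiple) of x and y in M with respect to left-divisibility. -/
namespace StructureMonoid

open FreeMonoid (ofList toList)

variable {X : Type*} (op : X → X → X)

local notation "M" => PresentedMonoid (structRels op)
local notation "ι" => PresentedMonoid.of (structRels op)
local notation "mk" => PresentedMonoid.mk (structRels op)

theorem of_mul_of_op (x y : X) : ι x * ι (op x y) = ι y * ι (op y x) :=
  PresentedMonoid.mk_eq_mk_of_rel ⟨x, y, rfl, rfl⟩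

theorem mk_ofList_cons (z : X) (w : List X) : mk (ofList (z :: w)) = ι z * mk (ofList w) :=
  map_mul _ (FreeMonoid.of z) (ofList w)

theorem mk_ofList_append_cons_cons (p s : List X) (a b : X) :
    mk (ofList (p ++ a :: op a b :: s)) = mk (ofList (p ++ b :: op b a :: s)) := by
  simp only [FreeMonoid.ofList_append, map_mul, mk_ofList_cons, ← mul_assoc (ι _),
    of_mul_of_op op a b]

variable [DecidableEq X]

def wordLeftDiv (t : X) : List X → Option M
  | [] => none
  | z :: w =>
    if t = z then some (mk (ofList w)) else (wordLeftDiv (op z t) w).map (ι (op t z) * ·)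

@[simp]
theorem wordLeftDiv_cons_self (t : X) (w : List X) :
    wordLeftDiv op t (t :: w) = some (mk (ofList w)) := by
  simp [wordLeftDiv]

theorem wordLeftDiv_cons_of_ne {t z : X} (h : t ≠ z) (w : List X) :
    wordLeftDiv op t (z :: w) = (wordLeftDiv op (op z t) w).map (ι (op t z) * ·) := by
  simp [wordLeftDiv, h]

theorem mk_ofList_eq_of_wordLeftDiv_eq_some {t : X} {w : List X} {g : M}
    (h : wordLeftDiv op t w = some g) : mk (ofList w) = ι t * g := by
  induction w generalizing t g with
  | nil => simp [wordLeftDiv] at h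
  | cons z w ih =>
    by_cases htz : t = z
    · subst htz
      rw [wordLeftDiv_cons_self, Option.some_inj] at h
      rw [← h, mk_ofList_cons]
    · rw [wordLeftDiv_cons_of_ne op htz] at h
      obtain ⟨g', hg', rfl⟩ := Option.map_eq_some_iff.1 h
      rw [mk_ofList_cons, ih hg', ← mul_assoc, of_mul_of_op, mul_assoc]

section RC

variable {op} (hRC : ∀ x y z : X, op (op x y) (op x z) = op (op y x) (op y z))
  (hinj : ∀ x : X, Function.Injective (op x))
include hRC hinj

theorem wordLeftDiv_cons_cons (t a b : X) (s : List X) :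
    wordLeftDiv op t (a :: op a b :: s) = wordLeftDiv op t (b :: op b a :: s) := by
  by_cases hab : a = b
  · rw [hab]
  by_cases hta : t = a
  · subst hta
    simp [wordLeftDiv_cons_of_ne op hab, PresentedMonoid.of]
  by_cases htb : t = b
  · subst htb
    simp [wordLeftDiv_cons_of_ne op hta, PresentedMonoid.of]
  rw [wordLeftDiv_cons_of_ne op hta, wordLeftDiv_cons_of_ne op htb,
    wordLeftDiv_cons_of_ne op ((hinj a).ne htb), wordLeftDiv_cons_of_ne op ((hinj b).ne hta),
    Option.map_map, Option.map_map, hRC a b t]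
  congr 1
  funext g
  -- after the RC law, this is the defining relation for `t ⊳ a` and `t ⊳ b`
  simp only [Function.comp_apply, ← mul_assoc, hRC a t b, hRC b t a, of_mul_of_op]

theorem wordLeftDiv_append_cons_cons (a b : X) (s p : List X) (t : X) :
    wordLeftDiv op t (p ++ a :: op a b :: s) = wordLeftDiv op t (p ++ b :: op b a :: s) := by
  induction p generalizing t with
  | nil => exact wordLeftDiv_cons_cons hRC hinj t a b s
  | cons c p ih =>
    by_cases htc : t = c
    · subst htc
      simp only [List.cons_append, wordLeftDiv_cons_self, mk_ofList_append_cons_cons]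
    · simp only [List.cons_append, wordLeftDiv_cons_of_ne op htc, ih]

theorem wordLeftDiv_eq_of_conGen {w₁ w₂ : FreeMonoid X} (h : conGen (structRels op) w₁ w₂)
    (t : X) : wordLeftDiv op t (toList w₁) = wordLeftDiv op t (toList w₂) := by
  let c : Con (FreeMonoid X) :=
    { r := fun w₁ w₂ => ∀ p s t,
        wordLeftDiv op t (toList (p * w₁ * s)) = wordLeftDiv op t (toList (p * w₂ * s))
      iseqv := ⟨fun _ _ _ _ => rfl, fun h p s t => (h p s t).symm,
        fun h h' p s t => (h p s t).trans (h' p s t)⟩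
      mul' := fun {_ b c _} hab hcd p s t => by
        have h₁ := hab p (c * s) t
        have h₂ := hcd (p * b) s t
        simp only [mul_assoc] at h₁ h₂ ⊢
        exact h₁.trans h₂ }
  have hle : conGen (structRels op) ≤ c := by
    refine Con.conGen_le.2 ?_
    rintro _ _ ⟨a, b, rfl, rfl⟩ p s t
    simpa [FreeMonoid.toList_mul] using wordLeftDiv_append_cons_cons hRC hinj a b
      (toList s) (toList p) t
  simpa using hle h 1 1 t

theorem of_op_dvd_of_of_mul_eq {x y : X} (hxy : x ≠ y) {g₁ g₂ : M}
    (h : ι x * g₁ = ι y * g₂) : ι (op x y) ∣ g₁ := by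
  induction g₁ using PresentedMonoid.inductionOn with | h u =>
  induction g₂ using PresentedMonoid.inductionOn with | h v =>
  have hdiv := wordLeftDiv_eq_of_conGen hRC hinj (w₁ := .of x * u) (w₂ := .of y * v)
    (PresentedMonoid.mk_eq_mk_iff.1 (by rwa [map_mul, map_mul])) y
  change wordLeftDiv op y (x :: toList u) = wordLeftDiv op y (y :: toList v) at hdiv
  rw [wordLeftDiv_cons_self, wordLeftDiv_cons_of_ne op hxy.symm] at hdiv
  obtain ⟨g, hg, -⟩ := Option.map_eq_some_iff.1 hdiv
  exact ⟨g, by simpa using mk_ofList_eq_of_wordLeftDiv_eq_some op hg⟩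

end RC

end StructureMonoid

theorem stmt7_general {X : Type*} [DecidableEq X] (op : X → X → X)
    (hRC : ∀ x y z : X, op (op x y) (op x z) = op (op y x) (op y z))
    (hL : ∀ x : X, Function.Bijective (op x))
    (x y : X) (hxy : x ≠ y) :
    (PresentedMonoid.of (structRels op) x * PresentedMonoid.of (structRels op) (op x y)
        = PresentedMonoid.of (structRels op) y * PresentedMonoid.of (structRels op) (op y x)) ∧
    (∀ h : PresentedMonoid (structRels op),
      (∃ g, h = PresentedMonoid.of (structRels op) x * g) →
      (∃ g, h = PresentedMonoid.of (structRels op) y * g) →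
      ∃ g, h = (PresentedMonoid.of (structRels op) x
        * PresentedMonoid.of (structRels op) (op x y)) * g) := by
  refine ⟨StructureMonoid.of_mul_of_op op x y, ?_⟩
  rintro _ ⟨g₁, rfl⟩ ⟨g₂, hg₂⟩
  obtain ⟨g, rfl⟩ :=
    StructureMonoid.of_op_dvd_of_of_mul_eq hRC (fun a => (hL a).injective) hxy hg₂
  exact ⟨g, (mul_assoc _ _ _).symm⟩

/-- in the structure monoid of a finite RC-quasigroup `(X, ⊳)`, for `x ≠ y` in
`X`, the element `x(x ⊳ y) = y(y ⊳ x)` is the right-lcm of `x` and `y` with respect to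
left-divisibility: it is a common right-multiple of `x` and `y`, and it left-divides every
common right-multiple of `x` and `y`. -/
theorem stmt7 {X : Type*} [Fintype X] [DecidableEq X] (op : X → X → X)
    (hRC : ∀ x y z : X, op (op x y) (op x z) = op (op y x) (op y z))
    (hL : ∀ x : X, Function.Bijective (op x))
    (x y : X) (hxy : x ≠ y) :
    (PresentedMonoid.of (structRels op) x * PresentedMonoid.of (structRels op) (op x y)
        = PresentedMonoid.of (structRels op) y * PresentedMonoid.of (structRels op) (op y x)) ∧
    (∀ h : PresentedMonoid (structRels op),
      (∃ g, h = PresentedMonoid.of (structRels op) x * g) →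
      (∃ g, h = PresentedMonoid.of (structRels op) y * g) →
      ∃ g, h = (PresentedMonoid.of (structRels op) x
        * PresentedMonoid.of (structRels op) (op x y)) * g) :=
  stmt7_general op hRC hL x y hxy
end

section
/- Let M be the structure monoid of a finite RC-quasigroup (X, ⊳) of size n and class p, with I-structure ν. For x ∈ X set x^{[p]} = ν(x^p). Then for all x ∈ X and u ∈ ℕⁿ, ν(x^p u) = x^{[p]} ν(u) holds in M. -/
section

variable {X : Type*} (op : X → X → X)

theorem PiAux.append_of_forall_eq {l' : List X} (hl' : ∀ y, PiAux op l' y = y) :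
    ∀ (l : List X) (y : X), PiAux op (l ++ l') y = PiAux op l y
  | [], y => hl' y
  | a :: l, y => by
    simp only [List.cons_append, PiAux, PiAux.append_of_forall_eq hl' l]

theorem SigmaRev.append_of_forall_piAux_eq {l' : List X} (hl' : ∀ y, PiAux op l' y = y) :
    ∀ l : List X, SigmaRev op (l ++ l') = SigmaRev op l' ++ SigmaRev op l
  | [] => by simp [SigmaRev]
  | a :: l => by
    simp [SigmaRev, SigmaRev.append_of_forall_piAux_eq hl' l, PiAux.append_of_forall_eq op hl']

theorem List.count_replicate_eq_smul_single [DecidableEq X] (p : ℕ) (x : X) :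
    (fun y => (List.replicate p x).count y) = p • Pi.single x 1 := by
  funext y
  by_cases h : y = x
  · simp [h]
  · simp [List.count_replicate, h, Ne.symm h]

theorem exists_list_count_eq [Fintype X] [DecidableEq X] (u : X → ℕ) :
    ∃ m : List X, (fun y => m.count y) = u := by
  refine ⟨(Finsupp.equivFunOnFinite.symm u).toMultiset.toList, funext fun y => ?_⟩
  rw [← Multiset.coe_count, Multiset.coe_toList, Finsupp.count_toMultiset]
  rfl

end

theorem stmt8_general {X : Type*} [Fintype X] [DecidableEq X] (op : X → X → X)
    (p : ℕ)
    (hclass : ∀ x y : X, PiAux op (List.replicate p x) y = y)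
    (ν : (X → ℕ) → PresentedMonoid (structRels op))
    (hSigma : ∀ l : List X,
      ν (fun x => l.count x)
        = ((SigmaRev op l.reverse).map (PresentedMonoid.of (structRels op))).prod) :
    ∀ (x : X) (u : X → ℕ),
      ν (p • Pi.single x 1 + u) = ν (p • Pi.single x 1) * ν u := by
  intro x u
  obtain ⟨m, rfl⟩ := exists_list_count_eq u
  have hcount : (fun y => (List.replicate p x ++ m).count y)
      = (fun y => (List.replicate p x).count y) + fun y => m.count y :=
    funext fun y => List.count_append
  rw [← List.count_replicate_eq_smul_single, ← hcount, hSigma, hSigma, hSigma,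
    List.reverse_append, List.reverse_replicate,
    SigmaRev.append_of_forall_piAux_eq op (hclass x), List.map_append, List.prod_append]

/-- in the structure monoid of a finite RC-quasigroup of class `p`, with
I-structure `ν`, one has `ν(x^p u) = x^{[p]} ν(u)` for all `x ∈ X` and `u ∈ ℕⁿ`,
where `x^{[p]} = ν(x^p)`. -/
theorem stmt8 {X : Type*} [Fintype X] [DecidableEq X] (op : X → X → X)
    (hRC : ∀ x y z : X, op (op x y) (op x z) = op (op y x) (op y z))
    (hL : ∀ x : X, Function.Bijective (op x))
    (p : ℕ) (hp : 0 < p)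
    (hclass : ∀ x y : X, PiAux op (List.replicate p x) y = y)
    (ν : (X → ℕ) → PresentedMonoid (structRels op))
    (hν : Function.Bijective ν) (hone : ν 0 = 1)
    (hSigma : ∀ l : List X,
      ν (fun x => l.count x)
        = ((SigmaRev op l.reverse).map (PresentedMonoid.of (structRels op))).prod) :
    ∀ (x : X) (u : X → ℕ),
      ν (p • Pi.single x 1 + u) = ν (p • Pi.single x 1) * ν u :=
  stmt8_general op p hclass ν hSigma
end

section
/- Let M be a monoid of right-I-type with I-structure ν : ℕⁿ → M. Then ν is compatible with left-divisibility: for all u, v ∈ ℕⁿ, u divides v in ℕⁿ (componentwise) if and only if ν(u) left-divides ν(v) in M. -/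
/-!
Since `ν (u + eₓ) = ν u * σ (π u x)`, adding a unit vector `eₓ` to the argument of `ν` is
right multiplication by a generator, so `u ≤ v` gives `ν u ⪯ ν v`. Conversely, multiplying `ν u`
by `ν w` one generator of `w` at a time stays in the image of `ν` and only increases the
argument: since `π t` is a permutation, the generator `σ (π w x)` equals `σ (π t y)` for
`y = (π t)⁻¹ (π w x)`. By bijectivity every `g` is some `ν w`, and `ν v = ν u * ν w = ν t`
forces `v = t ≥ u`.
-/

theorem Pi.induction_add_single {X : Type*} [Finite X] [DecidableEq X] {P : (X → ℕ) → Prop}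
    (zero : P 0) (step : ∀ u x, P u → P (u + Pi.single x 1)) (u : X → ℕ) : P u := by
  suffices h : ∀ d u, P u → P (u + d) by simpa using h u 0 zero
  intro d
  induction d using Pi.single_induction with
  | zero => simp
  | add f g hf hg => exact fun u hu ↦ add_assoc u f g ▸ hg _ (hf u hu)
  | single x m =>
    induction m with
    | zero => simp
    | succ m ih =>
      intro u hu
      rw [Pi.single_add, ← add_assoc]
      exact step _ x (ih u hu)

section RightIType

variable {X M : Type*} [DecidableEq X] [Monoid M] {σ : X → M} {ν : (X → ℕ) → M}
  {π : (X → ℕ) → Equiv.Perm X}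

theorem exists_mul_of_le [Finite X]
    (hstep : ∀ u x, ν (u + Pi.single x 1) = ν u * σ (π u x)) {u v : X → ℕ} (huv : u ≤ v) :
    ∃ g, ν v = ν u * g := by
  obtain ⟨d, rfl⟩ := exists_add_of_le huv
  induction d using Pi.induction_add_single with
  | zero => exact ⟨1, by simp⟩
  | step d x ih =>
    obtain ⟨g, hg⟩ := ih le_self_add
    exact ⟨g * σ (π (u + d) x), by rw [← add_assoc, hstep, hg, mul_assoc]⟩

theorem exists_le_of_mul [Finite X] (hone : ν 0 = 1)
    (hstep : ∀ u x, ν (u + Pi.single x 1) = ν u * σ (π u x)) (u w : X → ℕ) :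
    ∃ t, u ≤ t ∧ ν u * ν w = ν t := by
  induction w using Pi.induction_add_single with
  | zero => exact ⟨u, le_rfl, by rw [hone, mul_one]⟩
  | step w x ih =>
    obtain ⟨t, hut, ht⟩ := ih
    refine ⟨t + Pi.single ((π t).symm (π w x)) 1, hut.trans le_self_add, ?_⟩
    rw [hstep, ← mul_assoc, ht, hstep, Equiv.apply_symm_apply]

end RightIType

theorem stmt11_general {X : Type*} [Fintype X] [DecidableEq X] {M : Type*} [Monoid M]
    (σ : X → M)
    (ν : (X → ℕ) → M) (hν : Function.Bijective ν) (hone : ν 0 = 1)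
    (π : (X → ℕ) → Equiv.Perm X)
    (hstep : ∀ (u : X → ℕ) (x : X), ν (u + Pi.single x 1) = ν u * σ (π u x)) :
    ∀ u v : X → ℕ, (∀ x : X, u x ≤ v x) ↔ ∃ g : M, ν v = ν u * g := by
  intro u v
  refine ⟨exists_mul_of_le hstep, ?_⟩
  rintro ⟨g, hg⟩
  obtain ⟨w, rfl⟩ := hν.surjective g
  obtain ⟨t, hut, ht⟩ := exists_le_of_mul hone hstep u w
  exact hν.injective (hg.trans ht) ▸ hut

/-- for a cancellative monoid `M` of right-I-type with I-structure
`ν : ℕⁿ → M`, the map `ν` is compatible with left-divisibility: `u` divides `v`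
componentwise in `ℕⁿ` if and only if `ν(u)` left-divides `ν(v)` in `M`. -/
theorem stmt11 {X : Type*} [Fintype X] [DecidableEq X] {M : Type*} [Monoid M]
    (hlc : ∀ a b c : M, a * b = a * c → b = c)
    (hrc : ∀ a b c : M, b * a = c * a → b = c)
    (σ : X → M)
    (ν : (X → ℕ) → M) (hν : Function.Bijective ν) (hone : ν 0 = 1)
    (π : (X → ℕ) → Equiv.Perm X)
    (hstep : ∀ (u : X → ℕ) (x : X), ν (u + Pi.single x 1) = ν u * σ (π u x)) :
    ∀ u v : X → ℕ, (∀ x : X, u x ≤ v x) ↔ ∃ g : M, ν v = ν u * g :=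
  stmt11_general σ ν hν hone π hstep
end

section
/- Let M be the structure monoid of a finite RC-quasigroup of size n and class p ≥ 2, and Δ = ν(∏_{x∈X} x^{p-1}). Then the set of left-divisors of Δ coincides with the set of right-divisors of Δ, and Δ is a Garside element of M (its divisors are finite in number and generate M, since every element of X divides Δ). -/
/-!
The I-structure map `x ↦ (δₓ, x ⊳ ·)` is a homomorphism from `M` to the monoid `ℕ^X ⋊ Sym(X)`.
Since `ν` is an order isomorphism from `(ℕ^X, ≤)` onto `M` ordered by left divisibility, it
preserves ranks: `ν u` has length `∑ u`. With the relation
`E_k(x) · Π_{k+1}(x, …, x, y) = y · E_k(y ⊳ x)`, where `E_k(x) = rcPow op k x` is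
`e₀(x) ⋯ e_{k-1}(x)` and `e_j(x) = rcPi op j x x` is `Π_{j+1}(x, …, x)`, this identifies
`ν (k δₓ)` with `E_k(x)`, so the `ℕ^X`-coordinate of `ν u` is `u`: the I-structure map is
injective and `M` is cancellative.
The same relation shows that `y Δ` is left-divisible by every `E_{p-1}(x) = ν ((p-1) δₓ)`, hence
`M Δ ⊆ Δ M`, and so every right divisor of `Δ` is a left divisor. Complementation `g ↦ g⁻¹ Δ`
injects the finite set of left divisors into the right divisors, so the two sets coincide.
-/

open Function

/-- The monoid `ℕ^X ⋊ Sym(X)`, with `(u, σ) * (v, τ) = (u + v ∘ σ, τ ∘ σ)`. -/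
@[ext] structure VecPerm (X : Type*) where
  vec : X → ℕ
  perm : Equiv.Perm X

namespace VecPerm

variable {X : Type*}

instance : One (VecPerm X) := ⟨⟨0, Equiv.refl X⟩⟩
instance : Mul (VecPerm X) := ⟨fun a b => ⟨a.vec + b.vec ∘ a.perm, a.perm.trans b.perm⟩⟩

@[simp] lemma one_vec : (1 : VecPerm X).vec = 0 := rfl
@[simp] lemma one_perm : (1 : VecPerm X).perm = Equiv.refl X := rfl
@[simp] lemma mul_vec (a b : VecPerm X) : (a * b).vec = a.vec + b.vec ∘ a.perm := rfl
@[simp] lemma mul_perm (a b : VecPerm X) : (a * b).perm = a.perm.trans b.perm := rfl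

instance : Monoid (VecPerm X) where
  mul_assoc a b c := by ext <;> simp [add_assoc]
  one_mul a := by ext <;> simp
  mul_one a := by ext <;> simp

instance : IsCancelMul (VecPerm X) where
  mul_left_cancel a b c h := by
    have hvec := add_left_cancel (congrArg vec h)
    have hperm := congrArg perm h
    ext z
    · simpa using congrFun hvec (a.perm.symm z)
    · simpa using congrArg (fun σ => σ (a.perm.symm z)) hperm
  mul_right_cancel c a b h := by
    have hperm : a.perm = b.perm := by
      ext z
      exact c.perm.injective (congrArg (fun σ => σ z) (congrArg perm h))
    have hvec := congrArg vec h
    simp only [mul_vec, hperm] at hvec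
    exact VecPerm.ext (add_right_cancel hvec) hperm

variable [Fintype X]

def deg (a : VecPerm X) : ℕ := ∑ z, a.vec z

@[simp] lemma deg_one : (1 : VecPerm X).deg = 0 := by simp [deg]

lemma deg_mul (a b : VecPerm X) : (a * b).deg = a.deg + b.deg := by
  simp only [deg, mul_vec, Pi.add_apply, comp_apply, Finset.sum_add_distrib]
  rw [Equiv.sum_comp a.perm b.vec]

end VecPerm

section NatVectors

variable {X : Type*} [DecidableEq X]

lemma Pi.single_le_iff_le_apply {α : Type*} [AddMonoid α] [PartialOrder α]
    [CanonicallyOrderedAdd α] {x : X} {k : α} {u : X → α} : Pi.single x k ≤ u ↔ k ≤ u x := by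
  refine ⟨fun h => by simpa using h x, fun h z => ?_⟩
  rcases eq_or_ne z x with rfl | hz
  · simpa using h
  · simp [hz]

lemma eq_single_of_sum_eq {x : X} {k : ℕ} [Fintype X] {u : X → ℕ} (hu : ∀ z, u z ≠ 0 → z = x)
    (hsum : ∑ z, u z = k) : u = Pi.single x k := by
  have hux : u x = k := by
    rw [← hsum, Finset.sum_eq_single x (fun z _ hz => not_imp_comm.1 (hu z) hz) (by simp)]
  funext z
  rcases eq_or_ne z x with rfl | hz
  · simpa using hux
  · simpa [hz] using not_imp_comm.1 (hu z) hz

lemma sum_le_of_strictMono [Fintype X] {f : (X → ℕ) → ℕ} (hf : StrictMono f) (u : X → ℕ) :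
    ∑ x, u x ≤ f u := by
  induction h : ∑ x, u x generalizing u with
  | zero => exact Nat.zero_le _
  | succ n ih =>
    obtain ⟨z, -, hz⟩ := Finset.exists_ne_zero_of_sum_ne_zero (h.trans_ne n.succ_ne_zero)
    set u' := u - Pi.single z 1
    have hu : u' + Pi.single z 1 = u :=
      tsub_add_cancel_of_le (Pi.single_le_iff_le_apply.2 (Nat.one_le_iff_ne_zero.2 hz))
    have hsum : ∑ x, u' x = n := by
      rw [← hu] at h
      simpa [Finset.sum_add_distrib] using h
    have hlt : u' < u := hu ▸ lt_add_of_pos_right u' (Pi.lt_def.2 ⟨by simp, z, by simp⟩)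
    exact (ih u' hsum).trans_lt (hf hlt)

end NatVectors

theorem leftDivisors_eq_rightDivisors {M : Type*} [Monoid M] [IsCancelMul M] {Δ : M}
    (hfin : {g | ∃ h, g * h = Δ}.Finite) (hΔ : ∀ a, ∃ b, a * Δ = Δ * b) :
    {g | ∃ h, g * h = Δ} = {g | ∃ h, h * g = Δ} := by
  have hsub : {g | ∃ h, h * g = Δ} ⊆ {g | ∃ h, g * h = Δ} := by
    rintro g ⟨h, rfl⟩
    obtain ⟨b, hb⟩ := hΔ h
    exact ⟨b, (mul_left_cancel (hb.trans (mul_assoc h g b))).symm⟩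
  choose! c hc using fun g (hg : g ∈ {g | ∃ h, g * h = Δ}) => hg
  refine (Set.eq_of_subset_of_ncard_le hsub ?_ hfin).symm
  refine Set.ncard_le_ncard_of_injOn c (fun g hg => ⟨g, hc g hg⟩) (fun g hg g' hg' hgg' => ?_)
    (hfin.subset hsub)
  have hcc := (hc g hg).trans (hc g' hg').symm
  rw [hgg'] at hcc
  exact mul_right_cancel hcc

section RCCalculus

variable {X : Type*} {op : X → X → X}

local notation "ι" => PresentedMonoid.of (structRels op)

def rcPi (op : X → X → X) (k : ℕ) (x y : X) : X := PiAux op (List.replicate k x) y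

@[simp] lemma rcPi_zero (x y : X) : rcPi op 0 x y = y := rfl

lemma rcPi_succ (k : ℕ) (x y : X) : rcPi op (k + 1) x y = op (rcPi op k x x) (rcPi op k x y) :=
  rfl

lemma rcPi_bijective (hL : ∀ x, Bijective (op x)) (k : ℕ) (x : X) : Bijective (rcPi op k x) := by
  induction k with
  | zero => exact bijective_id
  | succ k ih => exact (hL _).comp ih

lemma op_rcPi_rcPi_self (hRC : ∀ x y z : X, op (op x y) (op x z) = op (op y x) (op y z))
    (k : ℕ) (x y : X) : op (rcPi op k x y) (rcPi op k x x) = rcPi op k (op y x) (op y x) := by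
  induction k with
  | zero => rfl
  | succ k ih => rw [rcPi_succ, rcPi_succ, hRC, ih, rcPi_succ]

def rcPow (op : X → X → X) : ℕ → X → PresentedMonoid (structRels op)
  | 0, _ => 1
  | k + 1, x => rcPow op k x * PresentedMonoid.of (structRels op) (rcPi op k x x)

lemma of_mul_of_op (x y : X) : ι x * ι (op x y) = ι y * ι (op y x) :=
  PresentedMonoid.mk_eq_mk_of_rel ⟨x, y, rfl, rfl⟩

lemma rcPow_mul_of_rcPi (hRC : ∀ x y z : X, op (op x y) (op x z) = op (op y x) (op y z))
    (k : ℕ) (x y : X) : rcPow op k x * ι (rcPi op k x y) = ι y * rcPow op k (op y x) := by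
  induction k with
  | zero => simp [rcPow]
  | succ k ih =>
    rw [rcPow, rcPi_succ, mul_assoc, of_mul_of_op, op_rcPi_rcPi_self hRC, ← mul_assoc, ih,
      mul_assoc, rcPow]

end RCCalculus

section IStructure

variable {X : Type*} [DecidableEq X] {op : X → X → X}
  (hRC : ∀ x y z : X, op (op x y) (op x z) = op (op y x) (op y z))
  (hL : ∀ x, Bijective (op x))

local notation "M" => PresentedMonoid (structRels op)
local notation "ι" => PresentedMonoid.of (structRels op)

noncomputable def toVecPerm : PresentedMonoid (structRels op) →* VecPerm X :=
  PresentedMonoid.lift (fun x => ⟨Pi.single x 1, Equiv.ofBijective (op x) (hL x)⟩) (by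
    rintro _ _ ⟨x, y, rfl, rfl⟩
    simp only [map_mul, FreeMonoid.lift_eval_of]
    ext z
    · simp only [VecPerm.mul_vec, Pi.add_apply, comp_apply, Equiv.ofBijective_apply,
        Pi.single_apply, (hL x).injective.eq_iff, (hL y).injective.eq_iff]
      exact add_comm _ _
    · exact hRC x y z)

@[simp] lemma toVecPerm_of (x : X) :
    toVecPerm hRC hL (ι x) = ⟨Pi.single x 1, Equiv.ofBijective (op x) (hL x)⟩ := rfl

lemma vec_toVecPerm_mono {a b : M} (h : a ∣ b) :
    (toVecPerm hRC hL a).vec ≤ (toVecPerm hRC hL b).vec := by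
  obtain ⟨c, rfl⟩ := h
  simp

lemma toVecPerm_rcPow (k : ℕ) (x : X) :
    (toVecPerm hRC hL (rcPow op k x)).vec = Pi.single x k ∧
      ⇑(toVecPerm hRC hL (rcPow op k x)).perm = rcPi op k x := by
  induction k with
  | zero => exact ⟨(Pi.single_zero x).symm, rfl⟩
  | succ k ih =>
    simp only [rcPow, map_mul, VecPerm.mul_vec, VecPerm.mul_perm, Equiv.coe_trans, toVecPerm_of,
      ih.1, ih.2]
    refine ⟨funext fun z => ?_, rfl⟩
    simp only [Pi.add_apply, comp_apply, Pi.single_apply,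
      (rcPi_bijective hL k x).injective.eq_iff]
    split_ifs <;> omega

variable [Fintype X]

lemma deg_toVecPerm_of (x : X) : (toVecPerm hRC hL (ι x)).deg = 1 := by
  simp [VecPerm.deg]

lemma deg_toVecPerm_rcPow (k : ℕ) (x : X) : (toVecPerm hRC hL (rcPow op k x)).deg = k := by
  simp [VecPerm.deg, (toVecPerm_rcPow hRC hL k x).1]

lemma eq_one_of_deg_toVecPerm_eq_zero {m : M} (h : (toVecPerm hRC hL m).deg = 0) : m = 1 := by
  induction m using Submonoid.induction_of_closure_eq_top_right
    (PresentedMonoid.closure_range_of _) with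
  | one => rfl
  | mul_right m _ hx =>
    obtain ⟨x, rfl⟩ := hx
    rw [map_mul, VecPerm.deg_mul, deg_toVecPerm_of] at h
    omega

end IStructure

section Nu

variable {X : Type*} [Fintype X] [DecidableEq X] {op : X → X → X}
  (hRC : ∀ x y z : X, op (op x y) (op x z) = op (op y x) (op y z))
  (hL : ∀ x, Bijective (op x))
  {ν : (X → ℕ) → PresentedMonoid (structRels op)} (hν : Bijective ν)
  (hof : ∀ x : X, ν (Pi.single x 1) = PresentedMonoid.of (structRels op) x)
  (hcompat : ∀ u v : X → ℕ, (∀ x : X, u x ≤ v x) ↔ ∃ g, ν v = ν u * g)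

local notation "ι" => PresentedMonoid.of (structRels op)

include hν hcompat

lemma strictMono_deg_toVecPerm_nu : StrictMono fun u => (toVecPerm hRC hL (ν u)).deg := by
  intro u v huv
  obtain ⟨g, hg⟩ := (hcompat u v).1 huv.le
  have hg1 : g ≠ 1 := by
    rintro rfl
    exact huv.ne (hν.injective (by rw [hg, mul_one]))
  have := mt (eq_one_of_deg_toVecPerm_eq_zero hRC hL) hg1
  simp only [hg, map_mul, VecPerm.deg_mul]
  omega

lemma deg_toVecPerm_nu_le (u : X → ℕ) : (toVecPerm hRC hL (ν u)).deg ≤ ∑ x, u x := by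
  suffices ∀ m, ∀ u, ν u = m → (toVecPerm hRC hL m).deg ≤ ∑ x, u x from this _ u rfl
  intro m
  induction m using Submonoid.induction_of_closure_eq_top_right
    (PresentedMonoid.closure_range_of _) with
  | one => simp
  | mul_right m _ hx ih =>
    obtain ⟨x, rfl⟩ := hx
    intro u hu
    obtain ⟨u', rfl⟩ := hν.surjective m
    have hle : u' ≤ u := (hcompat u' u).2 ⟨_, hu⟩
    have hne : u' ≠ u := by
      rintro rfl
      have := congrArg (fun m => (toVecPerm hRC hL m).deg) hu
      simp only [map_mul, VecPerm.deg_mul, deg_toVecPerm_of] at this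
      omega
    have hlt : ∑ x, u' x < ∑ x, u x := Fintype.sum_strictMono (lt_of_le_of_ne hle hne)
    have := ih u' rfl
    rw [map_mul, VecPerm.deg_mul, deg_toVecPerm_of]
    omega

lemma deg_toVecPerm_nu (u : X → ℕ) : (toVecPerm hRC hL (ν u)).deg = ∑ x, u x :=
  (deg_toVecPerm_nu_le hRC hL hν hcompat u).antisymm
    (sum_le_of_strictMono (strictMono_deg_toVecPerm_nu hRC hL hν hcompat) u)

include hRC hL hof in
lemma nu_single (k : ℕ) (x : X) : ν (Pi.single x k) = rcPow op k x := by
  obtain ⟨w, hw⟩ := hν.surjective (rcPow op k x)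
  have hsupp : ∀ z, w z ≠ 0 → z = x := by
    intro z hz
    have hdvd : ι z ∣ rcPow op k x := by
      rw [← hof, ← hw]
      exact (hcompat _ _).1 (Pi.single_le_iff_le_apply.2 (Nat.one_le_iff_ne_zero.2 hz))
    have := vec_toVecPerm_mono hRC hL hdvd z
    rw [(toVecPerm_rcPow hRC hL k x).1, toVecPerm_of] at this
    by_contra hzx
    simp [hzx] at this
  have hsum : ∑ z, w z = k := by
    rw [← deg_toVecPerm_nu hRC hL hν hcompat, hw, deg_toVecPerm_rcPow]
  rw [← hw, eq_single_of_sum_eq hsupp hsum]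

include hRC hL hof in
lemma vec_toVecPerm_nu (u : X → ℕ) : (toVecPerm hRC hL (ν u)).vec = u := by
  have hle : u ≤ (toVecPerm hRC hL (ν u)).vec := fun x => by
    have hdvd : ν (Pi.single x (u x)) ∣ ν u :=
      (hcompat _ _).1 (Pi.single_le_iff_le_apply.2 le_rfl)
    simpa [nu_single hRC hL hν hof hcompat, (toVecPerm_rcPow hRC hL _ x).1] using
      vec_toVecPerm_mono hRC hL hdvd x
  refine (eq_of_le_of_not_lt hle fun hlt => ?_).symm
  exact (Fintype.sum_strictMono hlt).ne (deg_toVecPerm_nu hRC hL hν hcompat u).symm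

include hRC hL hof in
lemma toVecPerm_injective : Injective (toVecPerm hRC hL) := by
  intro a b hab
  obtain ⟨u, rfl⟩ := hν.surjective a
  obtain ⟨v, rfl⟩ := hν.surjective b
  rw [← vec_toVecPerm_nu hRC hL hν hof hcompat u, ← vec_toVecPerm_nu hRC hL hν hof hcompat v,
    hab]

include hRC hL hof in
lemma exists_of_mul_nu_const (k : ℕ) (y : X) :
    ∃ g, ι y * ν (fun _ => k) = ν (fun _ => k) * g := by
  obtain ⟨w, hw⟩ := hν.surjective (ι y * ν (fun _ => k))
  suffices hkw : ∀ t, k ≤ w t by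
    obtain ⟨g, hg⟩ := (hcompat _ w).1 hkw
    exact ⟨g, hw ▸ hg⟩
  intro t
  obtain ⟨c, hc⟩ := (hcompat (Pi.single (op y t) k) (fun _ => k)).1
    (Pi.single_le_iff_le_apply.2 le_rfl)
  have hdvd : ν (Pi.single t k) ∣ ν w := ⟨ι (rcPi op k t y) * c, by
    rw [hw, hc, nu_single hRC hL hν hof hcompat, nu_single hRC hL hν hof hcompat, ← mul_assoc,
      ← mul_assoc, rcPow_mul_of_rcPi hRC]⟩
  exact Pi.single_le_iff_le_apply.1 ((hcompat _ _).2 hdvd)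

include hRC hL hof in
lemma exists_mul_nu_const (k : ℕ) (a : PresentedMonoid (structRels op)) :
    ∃ b, a * ν (fun _ => k) = ν (fun _ => k) * b := by
  induction a using Submonoid.induction_of_closure_eq_top_left
    (PresentedMonoid.closure_range_of _) with
  | one => exact ⟨1, by simp⟩
  | mul_left _ hx a ih =>
    obtain ⟨x, rfl⟩ := hx
    obtain ⟨b, hb⟩ := ih
    obtain ⟨g, hg⟩ := exists_of_mul_nu_const hRC hL hν hof hcompat k x
    exact ⟨g * b, by rw [mul_assoc, hb, ← mul_assoc, hg, mul_assoc]⟩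

end Nu

theorem stmt13_general {X : Type*} [Fintype X] [DecidableEq X] (op : X → X → X)
    (hRC : ∀ x y z : X, op (op x y) (op x z) = op (op y x) (op y z))
    (hL : ∀ x : X, Function.Bijective (op x))
    (p : ℕ) (hp : 2 ≤ p)
    (ν : (X → ℕ) → PresentedMonoid (structRels op))
    (hν : Function.Bijective ν)
    (hof : ∀ x : X, ν (Pi.single x 1) = PresentedMonoid.of (structRels op) x)
    (hcompat : ∀ u v : X → ℕ, (∀ x : X, u x ≤ v x) ↔ ∃ g, ν v = ν u * g) :
    {g : PresentedMonoid (structRels op) | ∃ h, g * h = ν (fun _ => p - 1)}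
        = {g : PresentedMonoid (structRels op) | ∃ h, h * g = ν (fun _ => p - 1)} ∧
      Set.Finite {g : PresentedMonoid (structRels op) | ∃ h, g * h = ν (fun _ => p - 1)} ∧
      Submonoid.closure {g : PresentedMonoid (structRels op) | ∃ h, g * h = ν (fun _ => p - 1)}
        = ⊤ ∧
      ∀ x : X, ∃ h, PresentedMonoid.of (structRels op) x * h = ν (fun _ => p - 1) := by
  have hgen : ∀ x : X, ∃ h, PresentedMonoid.of (structRels op) x * h = ν (fun _ => p - 1) := by
    intro x
    obtain ⟨h, hh⟩ := (hcompat (Pi.single x 1) (fun _ => p - 1)).1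
      (Pi.single_le_iff_le_apply.2 (show 1 ≤ p - 1 by omega))
    exact ⟨h, (hof x ▸ hh).symm⟩
  have hfin : Set.Finite {g | ∃ h, g * h = ν (fun _ => p - 1)} := by
    refine ((Set.finite_Iic (fun _ => p - 1)).image ν).subset ?_
    rintro g ⟨h, hgh⟩
    obtain ⟨u, rfl⟩ := hν.surjective g
    exact ⟨u, (hcompat _ _).2 ⟨h, hgh.symm⟩, rfl⟩
  have := (toVecPerm_injective hRC hL hν hof hcompat).isCancelMul _ (map_mul _)
  refine ⟨leftDivisors_eq_rightDivisors hfin (exists_mul_nu_const hRC hL hν hof hcompat _), hfin,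
    ?_, hgen⟩
  rw [eq_top_iff, ← PresentedMonoid.closure_range_of]
  exact Submonoid.closure_mono (Set.range_subset_iff.2 hgen)

/-- in the structure monoid of a finite RC-quasigroup of class `p ≥ 2`, with
`Δ = ν(∏_{x∈X} x^{p-1})`, the left-divisors of `Δ` coincide with its right-divisors, and `Δ`
is a Garside element: its divisors are finite in number and generate the monoid (in
particular every generator `x ∈ X` divides `Δ`). -/
theorem stmt13 {X : Type*} [Fintype X] [DecidableEq X] (op : X → X → X)
    (hRC : ∀ x y z : X, op (op x y) (op x z) = op (op y x) (op y z))
    (hL : ∀ x : X, Function.Bijective (op x))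
    (p : ℕ) (hp : 2 ≤ p)
    (hclass : ∀ x y : X, PiAux op (List.replicate p x) y = y)
    (ν : (X → ℕ) → PresentedMonoid (structRels op))
    (hν : Function.Bijective ν) (hone : ν 0 = 1)
    (hof : ∀ x : X, ν (Pi.single x 1) = PresentedMonoid.of (structRels op) x)
    (hcompat : ∀ u v : X → ℕ, (∀ x : X, u x ≤ v x) ↔ ∃ g, ν v = ν u * g) :
    {g : PresentedMonoid (structRels op) | ∃ h, g * h = ν (fun _ => p - 1)}
        = {g : PresentedMonoid (structRels op) | ∃ h, h * g = ν (fun _ => p - 1)} ∧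
      Set.Finite {g : PresentedMonoid (structRels op) | ∃ h, g * h = ν (fun _ => p - 1)} ∧
      Submonoid.closure {g : PresentedMonoid (structRels op) | ∃ h, g * h = ν (fun _ => p - 1)}
        = ⊤ ∧
      ∀ x : X, ∃ h, PresentedMonoid.of (structRels op) x * h = ν (fun _ => p - 1) :=
  stmt13_general op hRC hL p hp ν hν hof hcompat
end

section
/- Let M be the structure monoid of a finite RC-quasigroup of size n and class p ≥ 2, and Δ = ν(∏_{x∈X} x^{p-1}). Then Δ^p is central in M. -/
/-!
Write `ν(l)` for the image of the letter multiset of a word `l`. Unfolding `Σ` gives the product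
rule `ν(uv) = ν(u) · ν(Π_u(v))`, where `Π_u` acts letterwise by a bijection of `X`. A word in
which every letter occurs `c` times keeps this property under `Π_u`, so `c ↦ ν(cδ)` is
multiplicative and `Δ^p = ν(p(p-1)δ) = ν(pδ)^(p-1)`. Finally `ν(pδ)` commutes with every
generator `y`: both `y · ν(pδ)` and `ν(pδ) · y` equal `ν(pδ + y)`, because `pδ` can be written
as a product of blocks `x^p`, and by the class condition each such block acts trivially on `y`.
-/

section Words

variable {X : Type*} (op : X → X → X)

theorem piAux_append (r : List X) :
    ∀ (s : List X) (b : X), PiAux op (s ++ r) b = PiAux op (s.map (PiAux op r)) (PiAux op r b)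
  | [], _ => rfl
  | a :: s, b => by
    change op (PiAux op (s ++ r) a) (PiAux op (s ++ r) b) = _
    rw [piAux_append r s a, piAux_append r s b]
    rfl

theorem sigmaRev_append (r : List X) :
    ∀ s : List X, SigmaRev op (s ++ r) = SigmaRev op r ++ SigmaRev op (s.map (PiAux op r))
  | [] => by simp [SigmaRev]
  | a :: s => by
    change SigmaRev op (s ++ r) ++ [PiAux op (s ++ r) a]
      = SigmaRev op r ++ (SigmaRev op (s.map (PiAux op r)) ++ [PiAux op (s.map (PiAux op r)) _])
    rw [sigmaRev_append r s, piAux_append, List.append_assoc]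

variable {op}

theorem piAux_bijective (hL : ∀ x : X, Function.Bijective (op x)) :
    ∀ r : List X, Function.Bijective (PiAux op r)
  | [] => Function.bijective_id
  | a :: r => (hL (PiAux op r a)).comp (piAux_bijective hL r)

theorem piAux_flatMap_replicate {p : ℕ} (hclass : ∀ x y : X, PiAux op (List.replicate p x) y = y) :
    ∀ (xs : List X) (y : X), PiAux op (xs.flatMap (List.replicate p)) y = y
  | [], _ => rfl
  | x :: xs, y => by
    have hid := piAux_flatMap_replicate hclass xs
    rw [List.flatMap_cons, piAux_append, hid, List.map_replicate, hid, hclass]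

theorem count_map_of_bijective [DecidableEq X] {g : X → X} (hg : Function.Bijective g)
    {l : List X} {c : ℕ} (hl : ∀ x, l.count x = c) (x : X) : (l.map g).count x = c := by
  obtain ⟨a, rfl⟩ := hg.2 x
  rw [List.count_map_of_injective _ _ hg.1, hl]

end Words

noncomputable def constList (X : Type*) [Fintype X] (c : ℕ) : List X :=
  Finset.univ.toList.flatMap (List.replicate c)

theorem count_constList {X : Type*} [Fintype X] [DecidableEq X] (c : ℕ) (x : X) :
    (constList X c).count x = c := by
  simp [constList, List.count_flatMap, List.count_replicate, Finset.sum_map_toList]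

theorem piAux_constList {X : Type*} [Fintype X] {op : X → X → X} {p : ℕ}
    (hclass : ∀ x y : X, PiAux op (List.replicate p x) y = y) (y : X) :
    PiAux op (constList X p) y = y :=
  piAux_flatMap_replicate hclass _ y

-- The I-structure condition `ν(x₁⋯x_r) = Σ_r(x₁, …, x_r)`, with `X → ℕ` as the free commutative
-- monoid on `X` and the letters of `Σ_r` read in `M` through `f`.
def IsIStructure {X M : Type*} [DecidableEq X] [Monoid M] (op : X → X → X) (f : X → M)
    (ν : (X → ℕ) → M) : Prop :=
  ∀ l : List X, ν (fun x => l.count x) = ((SigmaRev op l.reverse).map f).prod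

namespace IsIStructure

variable {X M : Type*} [DecidableEq X] [Monoid M] {op : X → X → X} {f : X → M}
  {ν : (X → ℕ) → M}

theorem map_append (hν : IsIStructure op f ν) (l₁ l₂ : List X) :
    ν (fun x => (l₁ ++ l₂).count x)
      = ν (fun x => l₁.count x) * ν (fun x => (l₂.map (PiAux op l₁.reverse)).count x) := by
  rw [hν, hν, hν, List.reverse_append, sigmaRev_append, List.map_append, List.prod_append,
    List.map_reverse]

theorem map_zero (hν : IsIStructure op f ν) : ν (fun _ => 0) = 1 := by
  simpa [SigmaRev] using hν []

theorem map_singleton (hν : IsIStructure op f ν) (x : X) :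
    ν (fun y => [x].count y) = f x := by
  simpa [SigmaRev, PiAux] using hν [x]

variable [Fintype X]

theorem map_const_mul (hν : IsIStructure op f ν) (hL : ∀ x : X, Function.Bijective (op x))
    (c k : ℕ) : ν (fun _ => k * c) = ν (fun _ => c) ^ k := by
  induction k with
  | zero => simpa using hν.map_zero
  | succ k ih =>
    have hcount : ∀ x, (constList X c ++ constList X (k * c)).count x = (k + 1) * c := by
      intro x
      rw [List.count_append, count_constList, count_constList]
      ring
    calc ν (fun _ => (k + 1) * c)
        = ν (fun x => (constList X c ++ constList X (k * c)).count x) := by simp only [hcount]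
      _ = ν (fun _ => c) * ν (fun _ => k * c) := by
        rw [hν.map_append, funext (count_constList c),
          funext (count_map_of_bijective (piAux_bijective hL _) (count_constList (k * c)))]
      _ = ν (fun _ => c) ^ (k + 1) := by rw [ih, pow_succ']

theorem commute_map_const (hν : IsIStructure op f ν) (hL : ∀ x : X, Function.Bijective (op x))
    {p : ℕ} (hclass : ∀ x y : X, PiAux op (List.replicate p x) y = y) (y : X) :
    Commute (ν fun _ => p) (f y) := by
  have hleft : ν (fun x => ([y] ++ constList X p).count x) = f y * ν (fun _ => p) := by
    rw [hν.map_append, hν.map_singleton,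
      funext (count_map_of_bijective (piAux_bijective hL _) (count_constList p))]
  have hright : ν (fun x => ((constList X p).reverse ++ [y]).count x) = ν (fun _ => p) * f y := by
    rw [hν.map_append, List.reverse_reverse, List.map_singleton,
      piAux_constList hclass, hν.map_singleton]
    simp only [List.count_reverse, count_constList]
  have hcount : ∀ x, ([y] ++ constList X p).count x = ((constList X p).reverse ++ [y]).count x := by
    intro x
    simp only [List.count_append, List.count_reverse]
    omega
  rw [Commute, SemiconjBy, ← hright, ← funext hcount, hleft]

end IsIStructure

theorem PresentedMonoid.commute_of_forall_commute_of {α : Type*}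
    {rels : FreeMonoid α → FreeMonoid α → Prop} {z : PresentedMonoid rels}
    (h : ∀ x, Commute z (PresentedMonoid.of rels x)) (g : PresentedMonoid rels) : Commute z g := by
  have hle : Submonoid.closure (Set.range (PresentedMonoid.of rels)) ≤ Submonoid.centralizer {z} :=
    Submonoid.closure_le.2 <| Set.range_subset_iff.2 fun x =>
      Submonoid.mem_centralizer_iff.2 fun _ hz => hz ▸ (h x).eq
  exact Submonoid.mem_centralizer_iff.1
    (hle (PresentedMonoid.closure_range_of rels ▸ Submonoid.mem_top g)) z rfl

theorem stmt14_general {X : Type*} [Fintype X] [DecidableEq X] (op : X → X → X)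
    (hL : ∀ x : X, Function.Bijective (op x))
    (p : ℕ)
    (hclass : ∀ x y : X, PiAux op (List.replicate p x) y = y)
    (ν : (X → ℕ) → PresentedMonoid (structRels op))
    (hSigma : ∀ l : List X,
      ν (fun x => l.count x)
        = ((SigmaRev op l.reverse).map (PresentedMonoid.of (structRels op))).prod) :
    ∀ g : PresentedMonoid (structRels op),
      (ν (fun _ => p - 1)) ^ p * g = g * (ν (fun _ => p - 1)) ^ p := by
  intro g
  have hI : IsIStructure op (PresentedMonoid.of (structRels op)) ν := hSigma
  have hΔ : ν (fun _ => p - 1) ^ p = ν (fun _ => p) ^ (p - 1) := by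
    rw [← hI.map_const_mul hL, ← hI.map_const_mul hL, mul_comm]
  rw [hΔ]
  exact ((PresentedMonoid.commute_of_forall_commute_of
    (hI.commute_map_const hL hclass) g).pow_left (p - 1)).eq

/-- in the structure monoid of a finite RC-quasigroup of class `p ≥ 2`, with
`Δ = ν(∏_{x∈X} x^{p-1})`, the element `Δ^p` is central. -/
theorem stmt14 {X : Type*} [Fintype X] [DecidableEq X] (op : X → X → X)
    (hRC : ∀ x y z : X, op (op x y) (op x z) = op (op y x) (op y z))
    (hL : ∀ x : X, Function.Bijective (op x))
    (p : ℕ) (hp : 2 ≤ p)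
    (hclass : ∀ x y : X, PiAux op (List.replicate p x) y = y)
    (ν : (X → ℕ) → PresentedMonoid (structRels op))
    (hν : Function.Bijective ν) (hone : ν 0 = 1)
    (hof : ∀ x : X, ν (Pi.single x 1) = PresentedMonoid.of (structRels op) x)
    (hSigma : ∀ l : List X,
      ν (fun x => l.count x)
        = ((SigmaRev op l.reverse).map (PresentedMonoid.of (structRels op))).prod) :
    ∀ g : PresentedMonoid (structRels op),
      (ν (fun _ => p - 1)) ^ p * g = g * (ν (fun _ => p - 1)) ^ p :=
  stmt14_general op hL p hclass ν hSigma
end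

section
/- Let G be the structure group of a finite RC-quasigroup of size n and class p ≥ 2. The congruence ≡ on G (extending the mod-p congruence on M via central powers of Δ) has exactly pⁿ classes, and its kernel (the ≡-class of 1) is the free Abelian subgroup of G generated by the n elements x^{[p]}, x ∈ X. Hence there is a short exact sequence 1 → ℤⁿ → G → W → 1 with W = G/≡ of order pⁿ. -/
/-- The relators `x(x ⊳ y)(y(y ⊳ x))⁻¹` presenting the structure group of `(X, ⊳)`. -/
def structGroupRels {X : Type*} (op : X → X → X) : Set (FreeGroup X) :=
  { r | ∃ x y : X, r = FreeGroup.of x * FreeGroup.of (op x y)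
      * (FreeGroup.of y * FreeGroup.of (op y x))⁻¹ }

/-!
Sending `x` to `(e_x, (x ⊳ ·)⁻¹)` defines a homomorphism `Φ` from `G` to `ℤ^X ⋊ Sym(X)`, whose
first component `v : G → ℤ^X` is injective. On `M`, injectivity is a word-exchange argument: if
the vector of a word has a positive `z`-entry, the relations rewrite the word into one that
starts with `z`. It extends to `G` through a positive element `Δ` with `v Δ = (1, …, 1)`, a
vector fixed by all permutations: left divisibility in `M` is the componentwise order on
vectors, so every `g` has some `g Δ^n` in `M`. As `Φ(x^{[p]}) = (p e_x, 1)`, `Φ` maps the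
subgroup generated by the `x^{[p]}` isomorphically onto the normal subgroup of translations by
`pℤ^X`, and its cosets are the fibres of `v mod p`.
-/

section

open Equiv Function

section PermAction

variable {G α A : Type*} [Group G] [MulAction G α] [AddMonoid A]

/-- `(g • v) a = v (g⁻¹ • a)`. -/
abbrev arrowDistribMulAction : DistribMulAction G (α → A) where
  __ := arrowAction
  smul_zero _ := rfl
  smul_add _ _ _ := rfl

attribute [local instance] arrowDistribMulAction

@[simp] lemma perm_smul_apply (σ : Perm α) (v : α → A) (a : α) : (σ • v) a = v (σ.symm a) := rfl

@[simp] lemma perm_smul_one {B : Type*} [AddMonoidWithOne B] (σ : Perm α) :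
    σ • (1 : α → B) = 1 :=
  rfl

@[simp] lemma perm_smul_single [DecidableEq α] (σ : Perm α) (a : α) (b : A) :
    σ • (Pi.single a b : α → A) = Pi.single (σ a) b := by
  ext y
  simp [Pi.single_apply, Equiv.symm_apply_eq]

lemma perm_smul_nonneg {B : Type*} [Preorder B] [AddMonoid B] {σ : Perm α} {v : α → B}
    (hv : 0 ≤ v) : 0 ≤ σ • v :=
  fun a => hv (σ⁻¹ a)

lemma sum_perm_smul {B : Type*} [AddCommMonoid B] [Fintype α] (σ : Perm α) (v : α → B) :
    ∑ a, (σ • v) a = ∑ a, v a :=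
  Equiv.sum_comp σ⁻¹ v

end PermAction

attribute [local instance] arrowDistribMulAction

@[ext] structure IntWreath (X : Type*) where
  vec : X → ℤ
  perm : Perm X

namespace IntWreath

variable {X : Type*}

instance : Mul (IntWreath X) := ⟨fun g h => ⟨g.vec + g.perm • h.vec, g.perm * h.perm⟩⟩
instance : One (IntWreath X) := ⟨⟨0, 1⟩⟩
instance : Inv (IntWreath X) := ⟨fun g => ⟨-(g.perm⁻¹ • g.vec), g.perm⁻¹⟩⟩

@[simp] lemma mul_vec (g h : IntWreath X) : (g * h).vec = g.vec + g.perm • h.vec := rfl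
@[simp] lemma mul_perm (g h : IntWreath X) : (g * h).perm = g.perm * h.perm := rfl
@[simp] lemma one_vec : (1 : IntWreath X).vec = 0 := rfl
@[simp] lemma one_perm : (1 : IntWreath X).perm = 1 := rfl
@[simp] lemma inv_vec (g : IntWreath X) : g⁻¹.vec = -(g.perm⁻¹ • g.vec) := rfl
@[simp] lemma inv_perm (g : IntWreath X) : g⁻¹.perm = g.perm⁻¹ := rfl

instance : Group (IntWreath X) where
  mul_assoc _ _ _ := by ext <;> simp [mul_smul, add_assoc]
  one_mul _ := by ext <;> simp
  mul_one _ := by ext <;> simp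
  inv_mul_cancel _ := by ext <;> simp

def translPow (p : ℕ) : Multiplicative (X → ℤ) →* IntWreath X where
  toFun w := ⟨(p : ℤ) • w.toAdd, 1⟩
  map_one' := by ext <;> simp
  map_mul' _ _ := by ext <;> simp [mul_add]

@[simp] lemma translPow_vec (p : ℕ) (w : Multiplicative (X → ℤ)) :
    (translPow p w).vec = (p : ℤ) • w.toAdd := rfl

@[simp] lemma translPow_perm (p : ℕ) (w : Multiplicative (X → ℤ)) : (translPow p w).perm = 1 :=
  rfl

lemma inv_mul_vec (g k : IntWreath X) : (g⁻¹ * k).vec = g.perm⁻¹ • (k.vec - g.vec) := by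
  simp [smul_sub, neg_add_eq_sub]

lemma translPow_injective {p : ℕ} (hp : p ≠ 0) : Injective (translPow (X := X) p) := by
  intro v w hvw
  have := congrArg IntWreath.vec hvw
  simp only [translPow_vec] at this
  exact Multiplicative.toAdd.injective (smul_right_injective _ (by exact_mod_cast hp) this)

lemma normal_range_translPow (p : ℕ) : (translPow (X := X) p).range.Normal := by
  constructor
  rintro _ ⟨w, rfl⟩ g
  refine ⟨.ofAdd (g.perm • w.toAdd), ?_⟩
  ext <;> simp

end IntWreath

open IntWreath

lemma prod_map_prodMk {ι M N : Type*} [Monoid M] [Monoid N] (F : ι → M) (G : ι → N)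
    (l : List ι) : (l.map fun i => (F i, G i)).prod = ((l.map F).prod, (l.map G).prod) := by
  induction l <;> simp [*, Prod.one_eq_mk]

variable {X : Type*}

structure IsRCQuasigroup (op : X → X → X) : Prop where
  bijective_op : ∀ x, Bijective (op x)
  op_op_op : ∀ x y z, op (op x y) (op x z) = op (op y x) (op y z)

abbrev StructGroup (op : X → X → X) := PresentedGroup (structGroupRels op)

def RespectsRels {M : Type*} [Monoid M] (op : X → X → X) (F : X → M) : Prop :=
  ∀ x y, F x * F (op x y) = F y * F (op y x)

lemma respectsRels_of (op : X → X → X) :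
    RespectsRels op (PresentedGroup.of : X → StructGroup op) := fun x y =>
  PresentedGroup.mk_eq_mk_of_mul_inv_mem (rels := structGroupRels op)
    (x := FreeGroup.of x * FreeGroup.of (op x y)) ⟨x, y, rfl⟩

/-- `x^{[p]} = ν(x^p)`. -/
def bracketPow (op : X → X → X) (p : ℕ) (x : X) : StructGroup op :=
  ((SigmaRev op (List.replicate p x)).map PresentedGroup.of).prod

def powSubgroup (op : X → X → X) (p : ℕ) : Subgroup (StructGroup op) :=
  Subgroup.closure {g | ∃ x, g = bracketPow op p x}

lemma bracketPow_mem_powSubgroup (op : X → X → X) (p : ℕ) (x : X) :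
    bracketPow op p x ∈ powSubgroup op p :=
  Subgroup.subset_closure ⟨x, rfl⟩

/-- The image of the structure monoid `M` in `G`. -/
def positiveSubmonoid (op : X → X → X) : Submonoid (StructGroup op) where
  carrier := {g | ∃ l : List X, (l.map PresentedGroup.of).prod = g}
  mul_mem' := by
    rintro _ _ ⟨l, rfl⟩ ⟨m, rfl⟩
    exact ⟨l ++ m, by simp⟩
  one_mem' := ⟨[], rfl⟩

lemma sigmaRev_replicate_succ (x : X) (k : ℕ) :
    SigmaRev op (List.replicate (k + 1) x) =
      SigmaRev op (List.replicate k x) ++ [PiAux op (List.replicate k x) x] :=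
  rfl

namespace IsRCQuasigroup

variable {op : X → X → X} (h : IsRCQuasigroup op)
include h

noncomputable def ldiv (x : X) : Perm X := (Equiv.ofBijective (op x) (h.bijective_op x)).symm

@[simp] lemma ldiv_symm_apply (x y : X) : (h.ldiv x).symm y = op x y := rfl

@[simp] lemma ldiv_op (x y : X) : h.ldiv x (op x y) = y :=
  (Equiv.ofBijective (op x) (h.bijective_op x)).symm_apply_apply y

lemma ldiv_mul_ldiv_op (x y : X) :
    h.ldiv x * h.ldiv (op x y) = h.ldiv y * h.ldiv (op y x) := by
  rw [← inv_inj]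
  ext z
  simp [Perm.inv_def, h.op_op_op]

variable [DecidableEq X]

noncomputable def gen (x : X) : IntWreath X := ⟨Pi.single x 1, h.ldiv x⟩

@[simp] lemma gen_vec (x : X) : (h.gen x).vec = Pi.single x 1 := rfl
@[simp] lemma gen_perm (x : X) : (h.gen x).perm = h.ldiv x := rfl

lemma respectsRels_gen : RespectsRels op h.gen := by
  intro x y
  ext : 1
  · simp [add_comm]
  · exact h.ldiv_mul_ldiv_op x y

noncomputable def toWreath : StructGroup op →* IntWreath X :=
  PresentedGroup.toGroup (f := h.gen) <| by
    rintro _ ⟨x, y, rfl⟩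
    simpa [← mul_inv_rev, mul_inv_eq_one] using h.respectsRels_gen x y

@[simp] lemma toWreath_of (x : X) : h.toWreath (PresentedGroup.of x) = h.gen x :=
  PresentedGroup.toGroup.of _

lemma toWreath_prod_map_of (l : List X) :
    h.toWreath (l.map PresentedGroup.of).prod = (l.map h.gen).prod := by
  simp [map_list_prod, Function.comp_def]

lemma vec_prod_cons (x : X) (l : List X) :
    ((x :: l).map h.gen).prod.vec = Pi.single x 1 + h.ldiv x • (l.map h.gen).prod.vec := by
  simp only [List.map_cons, List.prod_cons, mul_vec, gen_vec, gen_perm]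

lemma vec_prod_nonneg (l : List X) : 0 ≤ (l.map h.gen).prod.vec := by
  induction l with
  | nil => simp
  | cons x l ih =>
    rw [h.vec_prod_cons]
    exact add_nonneg (Pi.single_nonneg.mpr zero_le_one) (perm_smul_nonneg ih)

lemma vec_prod_cons_apply_of_ne {x z : X} (hxz : x ≠ z) (l : List X) :
    ((x :: l).map h.gen).prod.vec z = (l.map h.gen).prod.vec (op x z) := by
  simp [hxz.symm]

lemma one_le_vec_prod_cons_self (x : X) (l : List X) : 1 ≤ ((x :: l).map h.gen).prod.vec x := by
  simpa [h.vec_prod_cons] using h.vec_prod_nonneg l (op x x)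

lemma exists_cons_prod_eq {M : Type*} [Monoid M] {F : X → M} (hF : RespectsRels op F) :
    ∀ {l : List X} {z : X}, 1 ≤ (l.map h.gen).prod.vec z →
      ∃ t, ((z :: t).map F).prod = (l.map F).prod := by
  intro l
  induction l with
  | nil => intro z hz; simp at hz
  | cons x l ih =>
    intro z hz
    rcases eq_or_ne x z with rfl | hxz
    · exact ⟨l, rfl⟩
    rw [h.vec_prod_cons_apply_of_ne hxz] at hz
    obtain ⟨t, ht⟩ := ih hz
    refine ⟨op z x :: t, ?_⟩
    simp only [List.map_cons, List.prod_cons] at ht ⊢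
    rw [← mul_assoc, ← hF x z, mul_assoc, ht]

theorem prod_eq_of_vec_eq {M : Type*} [Monoid M] {F : X → M} (hF : RespectsRels op F) :
    ∀ {l l' : List X}, (l.map h.gen).prod.vec = (l'.map h.gen).prod.vec →
      (l.map F).prod = (l'.map F).prod
  | [], [], _ => rfl
  | [], x :: l', hv => by
    have := h.one_le_vec_prod_cons_self x l'
    rw [← hv] at this
    simp at this
  | x :: l, l', hv => by
    -- exchanging letters for the pair `(F, gen)` keeps track of the vector as well
    have hFgen : RespectsRels op fun y => (F y, h.gen y) :=
      fun a b => Prod.ext (hF a b) (h.respectsRels_gen a b)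
    obtain ⟨t, ht⟩ := h.exists_cons_prod_eq hFgen (hv ▸ h.one_le_vec_prod_cons_self x l)
    rw [prod_map_prodMk, prod_map_prodMk, Prod.mk.injEq] at ht
    obtain ⟨htF, htgen⟩ := ht
    have hvt : (l.map h.gen).prod.vec = (t.map h.gen).prod.vec := by
      rw [← htgen, h.vec_prod_cons, h.vec_prod_cons] at hv
      exact smul_left_cancel _ (add_left_cancel hv)
    rw [← htF, List.map_cons, List.prod_cons, List.map_cons, List.prod_cons,
      prod_eq_of_vec_eq hF hvt]

lemma exists_vec_prod_eq [Fintype X] :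
    ∀ (n : ℕ) {u : X → ℤ}, 0 ≤ u → ∑ x, u x = n → ∃ l : List X, (l.map h.gen).prod.vec = u
  | 0, u, hu, hsum => by
    refine ⟨[], funext fun x => ?_⟩
    have := (Finset.sum_eq_zero_iff_of_nonneg fun x _ => hu x).mp hsum x
    simp_all
  | n + 1, u, hu, hsum => by
    obtain ⟨x, -, hx⟩ : ∃ x ∈ Finset.univ, (0 : X → ℤ) x < u x :=
      Finset.exists_lt_of_sum_lt (by simp [hsum])
    have hu' : 0 ≤ (h.ldiv x)⁻¹ • (u - Pi.single x 1) := by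
      refine perm_smul_nonneg fun y => ?_
      rcases eq_or_ne y x with rfl | hyx
      · simp only [Pi.zero_apply] at hx
        simp only [Pi.sub_apply, Pi.single_eq_same, Pi.zero_apply]
        omega
      · simpa [hyx] using hu y
    obtain ⟨l, hl⟩ := exists_vec_prod_eq n hu' (by
      simp only [sum_perm_smul, Pi.sub_apply, Finset.sum_sub_distrib, hsum]
      simp)
    exact ⟨x :: l, by rw [h.vec_prod_cons, hl, smul_inv_smul, add_sub_cancel]⟩

lemma vec_nonneg_of_mem_positiveSubmonoid {a : StructGroup op} (ha : a ∈ positiveSubmonoid op) :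
    0 ≤ (h.toWreath a).vec := by
  obtain ⟨l, rfl⟩ := ha
  simpa [h.toWreath_prod_map_of] using h.vec_prod_nonneg l

lemma exists_mem_positiveSubmonoid_vec_eq [Fintype X] {u : X → ℤ} (hu : 0 ≤ u) :
    ∃ a ∈ positiveSubmonoid op, (h.toWreath a).vec = u := by
  obtain ⟨l, hl⟩ := h.exists_vec_prod_eq _ hu
    (Int.toNat_of_nonneg (Finset.sum_nonneg fun x _ => hu x)).symm
  exact ⟨_, ⟨l, rfl⟩, by rw [h.toWreath_prod_map_of, hl]⟩

lemma eq_of_vec_eq {a b : StructGroup op} (ha : a ∈ positiveSubmonoid op)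
    (hb : b ∈ positiveSubmonoid op)
    (hab : (h.toWreath a).vec = (h.toWreath b).vec) : a = b := by
  obtain ⟨l, rfl⟩ := ha
  obtain ⟨m, rfl⟩ := hb
  rw [h.toWreath_prod_map_of, h.toWreath_prod_map_of] at hab
  exact h.prod_eq_of_vec_eq (respectsRels_of op) hab

lemma exists_mul_eq_of_vec_le [Fintype X] {a c : StructGroup op} (ha : a ∈ positiveSubmonoid op)
    (hc : c ∈ positiveSubmonoid op) (hac : (h.toWreath a).vec ≤ (h.toWreath c).vec) :
    ∃ b ∈ positiveSubmonoid op, a * b = c := by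
  obtain ⟨b, hb, hbv⟩ := h.exists_mem_positiveSubmonoid_vec_eq
    (u := (h.toWreath a).perm⁻¹ • ((h.toWreath c).vec - (h.toWreath a).vec))
    (perm_smul_nonneg (sub_nonneg.mpr hac))
  refine ⟨b, hb, h.eq_of_vec_eq (mul_mem ha hb) hc ?_⟩
  rw [map_mul, mul_vec, hbv, smul_inv_smul, add_sub_cancel]

lemma vec_mul_pow {D : StructGroup op} (hDv : (h.toWreath D).vec = 1) (g : StructGroup op)
    (n : ℕ) : (h.toWreath (g * D ^ n)).vec = (h.toWreath g).vec + n := by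
  induction n with
  | zero => simp
  | succ n ih => rw [pow_succ, ← mul_assoc, map_mul, mul_vec, ih, hDv]; push_cast; simp [add_assoc]

lemma vec_pow {D : StructGroup op} (hDv : (h.toWreath D).vec = 1) (n : ℕ) :
    (h.toWreath (D ^ n)).vec = n := by
  simpa using h.vec_mul_pow hDv 1 n

section Delta

variable [Fintype X] {D : StructGroup op} (hD : D ∈ positiveSubmonoid op)
  (hDv : (h.toWreath D).vec = 1)
include hD hDv

lemma exists_pow_mul_eq_mul_pow {a : StructGroup op} (ha : a ∈ positiveSubmonoid op) (n : ℕ) :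
    ∃ b ∈ positiveSubmonoid op, D ^ n * b = a * D ^ n := by
  refine h.exists_mul_eq_of_vec_le (pow_mem hD n) (mul_mem ha (pow_mem hD n)) ?_
  rw [h.vec_pow hDv, h.vec_mul_pow hDv]
  simpa using h.vec_nonneg_of_mem_positiveSubmonoid ha

lemma exists_mul_eq_pow {a : StructGroup op} (ha : a ∈ positiveSubmonoid op) :
    ∃ b ∈ positiveSubmonoid op, ∃ n : ℕ, a * b = D ^ n := by
  have hnn := h.vec_nonneg_of_mem_positiveSubmonoid ha
  set n := (∑ x, (h.toWreath a).vec x).toNat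
  obtain ⟨b, hb, hab⟩ := h.exists_mul_eq_of_vec_le ha (pow_mem hD n) (by
    rw [h.vec_pow hDv]
    intro x
    have := Finset.single_le_sum (fun y _ => hnn y) (Finset.mem_univ x)
    simp [n]
    omega)
  exact ⟨b, hb, n, hab⟩

lemma exists_mul_pow_mem_positiveSubmonoid (g : StructGroup op) :
    ∃ n : ℕ, g * D ^ n ∈ positiveSubmonoid op := by
  let H : Subgroup (StructGroup op) :=
    { carrier := {g | ∃ n : ℕ, g * D ^ n ∈ positiveSubmonoid op}
      one_mem' := ⟨0, by simp⟩
      mul_mem' := by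
        rintro a b ⟨m, ham⟩ ⟨n, hbn⟩
        obtain ⟨c, hc, hcD⟩ := h.exists_pow_mul_eq_mul_pow hD hDv hbn m
        refine ⟨n + m, ?_⟩
        have : a * b * D ^ (n + m) = a * (b * D ^ n * D ^ m) := by
          rw [pow_add]
          group
        rw [this, ← hcD, ← mul_assoc]
        exact mul_mem ham hc
      inv_mem' := by
        rintro a ⟨n, han⟩
        obtain ⟨b, hb, k, hab⟩ := h.exists_mul_eq_pow hD hDv han
        refine ⟨k, ?_⟩
        have : a⁻¹ * D ^ k = D ^ n * b := by
          rw [← hab]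
          group
        rw [this]
        exact mul_mem (pow_mem hD n) hb }
  exact PresentedGroup.generated_by _ H (fun x => ⟨0, by simpa using ⟨[x], by simp⟩⟩) g

end Delta

theorem vec_injective [Fintype X] : Injective fun g : StructGroup op => (h.toWreath g).vec := by
  intro g g' hv
  obtain ⟨D, hD, hDv⟩ := h.exists_mem_positiveSubmonoid_vec_eq (u := 1) zero_le_one
  obtain ⟨m, hm⟩ := h.exists_mul_pow_mem_positiveSubmonoid hD hDv g
  obtain ⟨n, hn⟩ := h.exists_mul_pow_mem_positiveSubmonoid hD hDv g'
  refine mul_right_cancel (b := D ^ (m + n)) (h.eq_of_vec_eq ?_ ?_ ?_)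
  · rw [pow_add, ← mul_assoc]
    exact mul_mem hm (pow_mem hD n)
  · rw [add_comm, pow_add, ← mul_assoc]
    exact mul_mem hn (pow_mem hD m)
  · rw [h.vec_mul_pow hDv, h.vec_mul_pow hDv]
    exact congrArg (· + _) hv

lemma toWreath_injective [Fintype X] : Injective h.toWreath :=
  fun _ _ hgg' => h.vec_injective (congrArg IntWreath.vec hgg')

lemma prod_map_gen_sigmaRev_replicate (x : X) (k : ℕ) :
    ((SigmaRev op (List.replicate k x)).map h.gen).prod.vec = Pi.single x (k : ℤ) ∧
      ⇑((SigmaRev op (List.replicate k x)).map h.gen).prod.perm.symm =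
        PiAux op (List.replicate k x) := by
  induction k with
  | zero => exact ⟨by simp [SigmaRev], rfl⟩
  | succ k ih =>
    obtain ⟨hv, hperm⟩ := ih
    set w := ((SigmaRev op (List.replicate k x)).map h.gen).prod
    have hx : w.perm (PiAux op (List.replicate k x) x) = x := by
      rw [← hperm, Equiv.apply_symm_apply]
    rw [sigmaRev_replicate_succ]
    simp only [List.map_append, List.prod_append, List.map_cons, List.map_nil, List.prod_cons,
      List.prod_nil, mul_one]
    refine ⟨?_, ?_⟩
    · rw [mul_vec, hv, gen_vec, perm_smul_single, hx, ← Pi.single_add]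
      push_cast
      rfl
    · funext y
      show (h.ldiv _).symm (w.perm.symm y) = op (PiAux op _ x) (PiAux op _ y)
      rw [ldiv_symm_apply, ← hperm]

variable {p : ℕ} (hclass : ∀ x y : X, PiAux op (List.replicate p x) y = y)
include hclass

lemma toWreath_bracketPow (x : X) :
    h.toWreath (bracketPow op p x) = translPow p (.ofAdd (Pi.single x 1)) := by
  obtain ⟨hv, hperm⟩ := h.prod_map_gen_sigmaRev_replicate x p
  rw [bracketPow, h.toWreath_prod_map_of]
  ext : 1
  · rw [hv, translPow_vec, toAdd_ofAdd, ← Pi.single_smul', smul_eq_mul, mul_one]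
  · rw [translPow_perm, ← inv_eq_one]
    exact Equiv.ext fun y => (congrFun hperm y).trans (hclass x y)

lemma map_powSubgroup [Fintype X] :
    (powSubgroup op p).map h.toWreath = (translPow p).range := by
  refine le_antisymm ((Subgroup.map_le_iff_le_comap).mpr <| (Subgroup.closure_le _).mpr ?_) ?_
  · rintro _ ⟨x, rfl⟩
    exact ⟨_, (h.toWreath_bracketPow hclass x).symm⟩
  · rintro _ ⟨w, rfl⟩
    rw [← ofAdd_toAdd w, ← Finset.univ_sum_single w.toAdd]
    induction (Finset.univ : Finset X) using Finset.induction_on with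
    | empty => simp
    | insert x s hx ih =>
      rw [Finset.sum_insert hx, ofAdd_add, map_mul]
      refine mul_mem ?_ ih
      refine ⟨_, zpow_mem (bracketPow_mem_powSubgroup op p x) (w.toAdd x), ?_⟩
      rw [map_zpow, h.toWreath_bracketPow hclass, ← map_zpow, ← ofAdd_zsmul, ← Pi.single_smul',
        smul_eq_mul, mul_one]

variable [Fintype X]

lemma powSubgroup_eq_comap : powSubgroup op p = (translPow p).range.comap h.toWreath := by
  rw [← h.map_powSubgroup hclass, Subgroup.comap_map_eq_self_of_injective h.toWreath_injective]

theorem powSubgroup_normal : (powSubgroup op p).Normal := by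
  rw [h.powSubgroup_eq_comap hclass]
  exact (normal_range_translPow p).comap _

theorem nonempty_powSubgroup_mulEquiv (hp : p ≠ 0) :
    Nonempty (powSubgroup op p ≃* Multiplicative (X → ℤ)) :=
  ⟨((powSubgroup op p).equivMapOfInjective _ h.toWreath_injective).trans <|
    (MulEquiv.subgroupCongr (h.map_powSubgroup hclass)).trans
      (MonoidHom.ofInjective (translPow_injective hp)).symm⟩

lemma mem_powSubgroup_iff {g : StructGroup op} :
    g ∈ powSubgroup op p ↔ ∀ x, (p : ℤ) ∣ (h.toWreath g).vec x := by
  refine ⟨fun hg x => ?_, fun hg => ?_⟩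
  · rw [h.powSubgroup_eq_comap hclass] at hg
    obtain ⟨w, hw⟩ := hg
    simp [← hw]
  · obtain ⟨s, hs, hsg⟩ : translPow p (.ofAdd fun x => (h.toWreath g).vec x / p) ∈
        (powSubgroup op p).map h.toWreath := by
      rw [h.map_powSubgroup hclass]
      exact ⟨_, rfl⟩
    have : s = g := h.vec_injective <| by
      funext x
      simp [hsg, Int.mul_ediv_cancel' (hg x)]
    exact this ▸ hs

lemma inv_mul_mem_powSubgroup_iff {a b : StructGroup op} :
    a⁻¹ * b ∈ powSubgroup op p ↔
      ∀ x, ((h.toWreath a).vec x : ZMod p) = (h.toWreath b).vec x := by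
  simp_rw [h.mem_powSubgroup_iff hclass, map_mul, map_inv, inv_mul_vec, perm_smul_apply,
    ZMod.intCast_eq_intCast_iff_dvd_sub]
  exact (h.toWreath a).perm⁻¹.symm.forall_congr_right
    (q := fun y => (p : ℤ) ∣ ((h.toWreath b).vec - (h.toWreath a).vec) y)

theorem card_quotient_powSubgroup (hp : p ≠ 0) :
    Nat.card (StructGroup op ⧸ powSubgroup op p) = p ^ Fintype.card X := by
  have : NeZero p := ⟨hp⟩
  let f : StructGroup op → X → ZMod p := fun g x => (h.toWreath g).vec x
  have hf : Surjective f := fun u => by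
    obtain ⟨a, -, ha⟩ := h.exists_mem_positiveSubmonoid_vec_eq (u := fun x => ((u x).val : ℤ))
      fun x => by positivity
    exact ⟨a, funext fun x => by simp [f, ha]⟩
  have hrel : ∀ a b, QuotientGroup.leftRel (powSubgroup op p) a b ↔ Setoid.ker f a b :=
    fun a b => by
      rw [QuotientGroup.leftRel_apply, h.inv_mul_mem_powSubgroup_iff hclass, Setoid.ker_def,
        funext_iff]
  let e : StructGroup op ⧸ powSubgroup op p ≃ (X → ZMod p) :=
    (Quotient.congrRight hrel).trans (Setoid.quotientKerEquivOfSurjective f hf)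
  rw [Nat.card_congr e, Nat.card_fun, Nat.card_zmod, Nat.card_eq_fintype_card]

end IsRCQuasigroup

end

theorem stmt16_general {X : Type*} [Fintype X] (op : X → X → X)
    (hRC : ∀ x y z : X, op (op x y) (op x z) = op (op y x) (op y z))
    (hL : ∀ x : X, Function.Bijective (op x))
    (p : ℕ) (hp : 2 ≤ p)
    (hclass : ∀ x y : X, PiAux op (List.replicate p x) y = y)
    (S : Subgroup (PresentedGroup (structGroupRels op)))
    (hS : S = Subgroup.closure
      {g | ∃ x : X, g = ((SigmaRev op (List.replicate p x)).map
        (PresentedGroup.of (rels := structGroupRels op))).prod}) :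
    S.Normal ∧ Nonempty (S ≃* Multiplicative (X → ℤ)) ∧
      Nat.card (PresentedGroup (structGroupRels op) ⧸ S) = p ^ Fintype.card X := by
  classical
  have h : IsRCQuasigroup op := ⟨hL, hRC⟩
  obtain rfl : S = powSubgroup op p := hS
  have hp0 : p ≠ 0 := by omega
  exact ⟨h.powSubgroup_normal hclass, h.nonempty_powSubgroup_mulEquiv hclass hp0,
    h.card_quotient_powSubgroup hclass hp0⟩

/-- let `G` be the structure group of a finite RC-quasigroup of size `n` and
class `p ≥ 2`, and let `S` be the subgroup of `G` generated by the `n` elements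
`x^{[p]}` (the image in `G` of the length-`p` word `Σ_p(x,...,x)`). Then `S` is normal
(it is the kernel of the congruence `≡`), `S` is free Abelian of rank `n` (isomorphic to
`ℤⁿ`), and the quotient `W = G/S` has order `pⁿ`: there is a short exact sequence
`1 → ℤⁿ → G → W → 1` with `|W| = pⁿ`. -/
theorem stmt16 {X : Type*} [Fintype X] [DecidableEq X] (op : X → X → X)
    (hRC : ∀ x y z : X, op (op x y) (op x z) = op (op y x) (op y z))
    (hL : ∀ x : X, Function.Bijective (op x))
    (p : ℕ) (hp : 2 ≤ p)
    (hclass : ∀ x y : X, PiAux op (List.replicate p x) y = y)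
    (S : Subgroup (PresentedGroup (structGroupRels op)))
    (hS : S = Subgroup.closure
      {g | ∃ x : X, g = ((SigmaRev op (List.replicate p x)).map
        (PresentedGroup.of (rels := structGroupRels op))).prod}) :
    S.Normal ∧ Nonempty (S ≃* Multiplicative (X → ℤ)) ∧
      Nat.card (PresentedGroup (structGroupRels op) ⧸ S) = p ^ Fintype.card X :=
  stmt16_general op hRC hL p hp hclass S hS
end

section
/- Consider X = {a, b, c} with x ⊳ y = f(y) where f is the 3-cycle a ↦ b ↦ c ↦ a. Then (X, ⊳) is an RC-quasigroup of class 3, its structure group G has presentation ⟨a, b, c | ac = b², ba = c², cb = a²⟩, and the quotient W obtained by adding the relation abc = 1 has order 27. -/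
open Subgroup

section StructureGroup

variable {X : Type*} (op : X → X → X)

def structRel (x y : X) : FreeGroup X :=
  FreeGroup.of x * FreeGroup.of (op x y) * (FreeGroup.of y * FreeGroup.of (op y x))⁻¹

theorem structRel_swap (x y : X) : structRel op y x = (structRel op x y)⁻¹ := by
  simp [structRel, mul_assoc]

theorem normalClosure_structGroupRels_eq {R : Set (FreeGroup X)} (hR : R ⊆ structGroupRels op)
    (hcover : ∀ x y, x ≠ y → structRel op x y ∈ R ∨ structRel op y x ∈ R) :
    normalClosure (structGroupRels op) = normalClosure R := by
  refine le_antisymm (normalClosure_le_normal ?_) (normalClosure_mono hR)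
  rintro _ ⟨x, y, rfl⟩
  change structRel op x y ∈ normalClosure R
  obtain rfl | hxy := eq_or_ne x y
  · rw [structRel, mul_inv_cancel]
    exact one_mem _
  rcases hcover x y hxy with h | h
  · exact subset_normalClosure h
  · simpa [structRel_swap op x y] using inv_mem (subset_normalClosure h)

end StructureGroup

def cycleRels : Set (FreeGroup (Fin 3)) :=
  {FreeGroup.of (0 : Fin 3) * FreeGroup.of (2 : Fin 3)
            * (FreeGroup.of (1 : Fin 3) * FreeGroup.of (1 : Fin 3))⁻¹,
          FreeGroup.of (1 : Fin 3) * FreeGroup.of (0 : Fin 3)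
            * (FreeGroup.of (2 : Fin 3) * FreeGroup.of (2 : Fin 3))⁻¹,
          FreeGroup.of (2 : Fin 3) * FreeGroup.of (1 : Fin 3)
            * (FreeGroup.of (0 : Fin 3) * FreeGroup.of (0 : Fin 3))⁻¹}

def cycleQuotientRels : Set (FreeGroup (Fin 3)) :=
  cycleRels ∪ {FreeGroup.of (0 : Fin 3) * FreeGroup.of (1 : Fin 3) * FreeGroup.of (2 : Fin 3)}

theorem normalClosure_structGroupRels_succ :
    normalClosure (structGroupRels fun (_ : Fin 3) (y : Fin 3) => y + 1)
      = normalClosure cycleRels := by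
  refine normalClosure_structGroupRels_eq _ ?_ ?_
  · rintro _ (rfl | rfl | rfl)
    exacts [⟨0, 1, rfl⟩, ⟨1, 2, rfl⟩, ⟨2, 0, rfl⟩]
  · simp only [cycleRels, Set.mem_insert_iff, Set.mem_singleton_iff]
    decide

section NormalForm

variable {G : Type*} [Group G] {a t : G} {k : ℕ}

theorem pow_mul_pow_eq_of_mul_eq (hat : a * t = t * a ^ k) (i j : ℕ) :
    a ^ i * t ^ j = t ^ j * a ^ (k ^ j * i) := by
  have hconj : ∀ i : ℕ, a ^ i * t = t * a ^ (k * i) := fun i => by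
    simpa [pow_mul] using ((SemiconjBy.pow_right hat.symm i).eq).symm
  induction j generalizing i with
  | zero => simp
  | succ j ih =>
    rw [pow_succ, ← mul_assoc, ih, mul_assoc, hconj, ← mul_assoc, ← pow_succ, pow_succ' k,
      mul_assoc]

theorem inv_pow_eq_pow_of_pow_eq_one {x : G} {n : ℕ} (hn : 0 < n) (hx : x ^ n = 1) (i : ℕ) :
    (x ^ i)⁻¹ = x ^ ((n - 1) * i) := by
  refine inv_eq_of_mul_eq_one_right ?_
  rw [← pow_add, add_comm, ← add_one_mul, Nat.sub_one_add_one hn.ne', pow_mul, hx, one_pow]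

theorem closure_pair_subset_range_pow_mul_pow {m n : ℕ} (hm : 0 < m) (ht : t ^ m = 1)
    (hn : 0 < n) (ha : a ^ n = 1) (hat : a * t = t * a ^ k) :
    (closure {a, t} : Set G) ⊆
      Set.range fun p : Fin m × Fin n => t ^ (p.1 : ℕ) * a ^ (p.2 : ℕ) := by
  have mul_mem : ∀ j i j' i' : ℕ, ∃ j'' i'' : ℕ,
      t ^ j * a ^ i * (t ^ j' * a ^ i') = t ^ j'' * a ^ i'' := fun j i j' i' =>
    ⟨j + j', k ^ j' * i + i', by
      rw [mul_assoc, ← mul_assoc (a ^ i), pow_mul_pow_eq_of_mul_eq hat]; group⟩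
  intro g hg
  obtain ⟨j, i, rfl⟩ : ∃ j i : ℕ, g = t ^ j * a ^ i := by
    induction hg using closure_induction with
    | mem x hx =>
      rcases hx with rfl | rfl
      exacts [⟨0, 1, by simp⟩, ⟨1, 0, by simp⟩]
    | one => exact ⟨0, 0, by simp⟩
    | mul x y _ _ hx hy =>
      obtain ⟨j, i, rfl⟩ := hx
      obtain ⟨j', i', rfl⟩ := hy
      exact mul_mem j i j' i'
    | inv x _ hx =>
      obtain ⟨j, i, rfl⟩ := hx
      simpa [mul_inv_rev, inv_pow_eq_pow_of_pow_eq_one hm ht, inv_pow_eq_pow_of_pow_eq_one hn ha]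
        using mul_mem 0 ((n - 1) * i) ((m - 1) * j) 0
  exact ⟨(⟨j % m, Nat.mod_lt _ hm⟩, ⟨i % n, Nat.mod_lt _ hn⟩),
    by simp only [← pow_eq_pow_mod _ ht, ← pow_eq_pow_mod _ ha]⟩

end NormalForm

section CyclicRelations

variable {G : Type*} [Group G] {a b c : G}

theorem inv_mul_mul_eq_inv_sq_of_mul_eq
    (hcb : c * b = a * a) (habc : a * b * c = 1) : b⁻¹ * a * b = (a ^ 2)⁻¹ := by
  obtain rfl : c = (a * b)⁻¹ := eq_inv_of_mul_eq_one_right habc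
  calc b⁻¹ * a * b = ((a * b)⁻¹ * b)⁻¹ := by group
    _ = (a ^ 2)⁻¹ := by rw [hcb, sq]

theorem mul_mul_inv_eq_inv_sq_of_mul_eq
    (hac : a * c = b * b) (habc : a * b * c = 1) : a * b * a⁻¹ = (b ^ 2)⁻¹ := by
  obtain rfl : c = (a * b)⁻¹ := eq_inv_of_mul_eq_one_right habc
  calc a * b * a⁻¹ = (a * (a * b)⁻¹)⁻¹ := by group
    _ = (b ^ 2)⁻¹ := by rw [hac, sq]

theorem pow_three_eq_of_conj (hb : b⁻¹ * a * b = (a ^ 2)⁻¹) (ha : a * b * a⁻¹ = (b ^ 2)⁻¹) :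
    b ^ 3 = a ^ 3 := by
  have h : b * (a ^ 2)⁻¹ = (b ^ 2)⁻¹ * a := by
    rw [← hb, ← ha]; group
  calc b ^ 3 = (b ^ 2) * (b * (a ^ 2)⁻¹) * a ^ 2 := by group
    _ = a ^ 3 := by rw [h]; group

theorem pow_nine_eq_one_of_conj (hb : b⁻¹ * a * b = (a ^ 2)⁻¹) (ha : a * b * a⁻¹ = (b ^ 2)⁻¹) :
    a ^ 9 = 1 := by
  have h3 := pow_three_eq_of_conj hb ha
  have : a ^ 3 = (a ^ 6)⁻¹ := by
    calc a ^ 3 = b⁻¹ * a ^ 3 * b := by rw [← h3]; group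
      _ = (b⁻¹ * a * b) ^ 3 := by simpa using (conj_pow (a := b⁻¹) (b := a) (i := 3)).symm
      _ = (a ^ 6)⁻¹ := by rw [hb]; group
  calc a ^ 9 = a ^ 3 * a ^ 6 := by group
    _ = 1 := by rw [this]; group

theorem mul_conj_eq_conj_mul_pow_seven (hb : b⁻¹ * a * b = (a ^ 2)⁻¹)
    (ha : a * b * a⁻¹ = (b ^ 2)⁻¹) : a * (b * a⁻¹) = b * a⁻¹ * a ^ 7 := by
  have h9 := pow_nine_eq_one_of_conj hb ha
  calc a * (b * a⁻¹) = b * (b⁻¹ * a * b) * a⁻¹ := by group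
    _ = b * a⁻¹ * a ^ 7 * (a ^ 9)⁻¹ := by rw [hb]; group
    _ = b * a⁻¹ * a ^ 7 := by rw [h9]; group

theorem conj_pow_three_eq_one (hb : b⁻¹ * a * b = (a ^ 2)⁻¹) (ha : a * b * a⁻¹ = (b ^ 2)⁻¹) :
    (b * a⁻¹) ^ 3 = 1 := by
  calc (b * a⁻¹) ^ 3 = b ^ 2 * (b⁻¹ * a * b)⁻¹ * (a ^ 2)⁻¹ * (a * b * a⁻¹) := by
        rw [pow_succ _ 2, pow_two]; group
    _ = 1 := by rw [hb, ha]; group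

end CyclicRelations

def affShift : Equiv.Perm (ZMod 9) := Equiv.addRight 1

def affScale : Equiv.Perm (ZMod 9) where
  toFun x := 4 * x
  invFun x := 7 * x
  left_inv := by decide
  right_inv := by decide

theorem injective_affScale_pow_mul_affShift_pow :
    Function.Injective fun p : Fin 3 × Fin 9 => affScale ^ (p.1 : ℕ) * affShift ^ (p.2 : ℕ) := by
  decide

def toAffine : PresentedGroup cycleQuotientRels →* Equiv.Perm (ZMod 9) :=
  PresentedGroup.toGroup (f := ![affShift, affScale * affShift, affScale ^ 2 * affShift ^ 4]) <| by
    rintro _ ((rfl | rfl | rfl) | rfl) <;>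
      simp only [map_mul, map_inv, FreeGroup.lift_apply_of] <;> decide

theorem toAffine_pow_mul_pow (j i : ℕ) :
    toAffine ((PresentedGroup.of 1 * (PresentedGroup.of 0)⁻¹) ^ j * PresentedGroup.of 0 ^ i)
      = affScale ^ j * affShift ^ i := by
  simp [toAffine, PresentedGroup.toGroup.of]

theorem card_presentedGroup_cycleQuotientRels :
    Nat.card (PresentedGroup cycleQuotientRels) = 27 := by
  set a : PresentedGroup cycleQuotientRels := .of 0
  set b : PresentedGroup cycleQuotientRels := .of 1
  have habc : a * b * .of 2 = 1 := PresentedGroup.one_of_mem (Or.inr rfl)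
  have hb : b⁻¹ * a * b = (a ^ 2)⁻¹ := inv_mul_mul_eq_inv_sq_of_mul_eq
    (PresentedGroup.mk_eq_mk_of_mul_inv_mem (Or.inl (Or.inr (Or.inr rfl)))) habc
  have ha : a * b * a⁻¹ = (b ^ 2)⁻¹ := mul_mul_inv_eq_inv_sq_of_mul_eq
    (PresentedGroup.mk_eq_mk_of_mul_inv_mem (Or.inl (Or.inl rfl))) habc
  have hgen : ∀ w, w ∈ closure {a, b * a⁻¹} := by
    have ha_mem : a ∈ closure {a, b * a⁻¹} := subset_closure (Or.inl rfl)
    have hb_mem : b ∈ closure {a, b * a⁻¹} := by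
      simpa using mul_mem (subset_closure (Or.inr rfl) : b * a⁻¹ ∈ closure {a, b * a⁻¹}) ha_mem
    refine PresentedGroup.generated_by _ _ fun j => ?_
    fin_cases j
    exacts [ha_mem, hb_mem, eq_inv_of_mul_eq_one_right habc ▸ inv_mem (mul_mem ha_mem hb_mem)]
  let f : Fin 3 × Fin 9 → PresentedGroup cycleQuotientRels :=
    fun p => (b * a⁻¹) ^ (p.1 : ℕ) * a ^ (p.2 : ℕ)
  have hsurj : f.Surjective := fun w =>
    closure_pair_subset_range_pow_mul_pow (by norm_num) (conj_pow_three_eq_one hb ha)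
      (by norm_num) (pow_nine_eq_one_of_conj hb ha) (mul_conj_eq_conj_mul_pow_seven hb ha) (hgen w)
  have hinj : f.Injective := fun p q h => injective_affScale_pow_mul_affShift_pow <|
    (toAffine_pow_mul_pow _ _).symm.trans ((congrArg toAffine h).trans (toAffine_pow_mul_pow _ _))
  simpa using (Nat.card_eq_of_bijective f ⟨hinj, hsurj⟩).symm

/-- for `X = {a, b, c}` (encoded as `Fin 3` with `a = 0`, `b = 1`, `c = 2`)
and `x ⊳ y = f(y)` with `f` the cycle `a ↦ b ↦ c ↦ a`, the pair `(X, ⊳)` is an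
RC-quasigroup of class 3, its structure group `G` is isomorphic to the group presented by
`⟨a, b, c ∣ ac = b², ba = c², cb = a²⟩`, and the quotient obtained by adding the relation
`abc = 1` has order `27`. -/
theorem stmt18 :
    (∀ x y z : Fin 3, (fun (_ : Fin 3) (y : Fin 3) => y + 1) ((fun _ y => y + 1) x y)
        ((fun (_ : Fin 3) (y : Fin 3) => y + 1) x z)
      = (fun (_ : Fin 3) (y : Fin 3) => y + 1) ((fun _ y => y + 1) y x)
        ((fun (_ : Fin 3) (y : Fin 3) => y + 1) y z)) ∧
    (∀ x : Fin 3, Function.Bijective ((fun (_ : Fin 3) (y : Fin 3) => y + 1) x)) ∧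
    (∀ x y : Fin 3,
      PiAux (fun (_ : Fin 3) (y : Fin 3) => y + 1) (List.replicate 3 x) y = y) ∧
    Nonempty (PresentedGroup (structGroupRels (fun (_ : Fin 3) (y : Fin 3) => y + 1))
      ≃* PresentedGroup ({FreeGroup.of (0 : Fin 3) * FreeGroup.of (2 : Fin 3)
            * (FreeGroup.of (1 : Fin 3) * FreeGroup.of (1 : Fin 3))⁻¹,
          FreeGroup.of (1 : Fin 3) * FreeGroup.of (0 : Fin 3)
            * (FreeGroup.of (2 : Fin 3) * FreeGroup.of (2 : Fin 3))⁻¹,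
          FreeGroup.of (2 : Fin 3) * FreeGroup.of (1 : Fin 3)
            * (FreeGroup.of (0 : Fin 3) * FreeGroup.of (0 : Fin 3))⁻¹} : Set (FreeGroup (Fin 3)))) ∧
    Nat.card (PresentedGroup (({FreeGroup.of (0 : Fin 3) * FreeGroup.of (2 : Fin 3)
            * (FreeGroup.of (1 : Fin 3) * FreeGroup.of (1 : Fin 3))⁻¹,
          FreeGroup.of (1 : Fin 3) * FreeGroup.of (0 : Fin 3)
            * (FreeGroup.of (2 : Fin 3) * FreeGroup.of (2 : Fin 3))⁻¹,
          FreeGroup.of (2 : Fin 3) * FreeGroup.of (1 : Fin 3)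
            * (FreeGroup.of (0 : Fin 3) * FreeGroup.of (0 : Fin 3))⁻¹} : Set (FreeGroup (Fin 3)))
        ∪ {FreeGroup.of (0 : Fin 3) * FreeGroup.of (1 : Fin 3) * FreeGroup.of (2 : Fin 3)}))
      = 27 :=
  ⟨by decide, by decide, by decide,
    ⟨QuotientGroup.quotientMulEquivOfEq normalClosure_structGroupRels_succ⟩,
    card_presentedGroup_cycleQuotientRels⟩
end
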